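/- arXiv:math/0309256 — 11 statements merged into one kernel-verified Lean document; each statement's English description precedes it below -/
import Mathlib

section
/- Let Q ⊆ ℤ^d be an affine semigroup that is saturated, presented by facet functionals as Q = {β ∈ ℤ^d : τ_i(β) ≥ 0 for all i = 1,…,n}, and let F be a face of Q. Then for every α ∈ ℤ^d the difference set α + F − Q equals {β ∈ ℤ^d : τ_i(β) ≤ τ_i(α) for every index i such that τ_i vanishes identically on F}. -/
open Pointwise

/-- `F` is a face of the affine semigroup (given as a subset of `ℤ^d`) `Q`:
it is cut out of `Q` by a `ℤ`-linear functional that is nonnegative on `Q`. -/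
def IsFaceOf {d : ℕ} (Q F : Set (Fin d → ℤ)) : Prop :=
  ∃ lam : (Fin d → ℤ) →ₗ[ℤ] ℤ, (∀ q ∈ Q, 0 ≤ lam q) ∧ F = {q | q ∈ Q ∧ lam q = 0}

/-- If `Q` is a saturated affine semigroup presented by facet functionals
`τ_1, …, τ_n`, and `F` is a face of `Q`, then for every `α ∈ ℤ^d`,
`α + F − Q = {β : τ_i β ≤ τ_i α whenever τ_i vanishes on F}`. -/
theorem stmt0 {d n : ℕ} (Q : AddSubmonoid (Fin d → ℤ)) (hfg : Q.FG)
    (τ : Fin n → ((Fin d → ℤ) →ₗ[ℤ] ℤ))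
    (hQ : (Q : Set (Fin d → ℤ)) = {β | ∀ i, 0 ≤ τ i β})
    (F : Set (Fin d → ℤ)) (hF : IsFaceOf (Q : Set (Fin d → ℤ)) F)
    (α : Fin d → ℤ) :
    α +ᵥ (F - (Q : Set (Fin d → ℤ))) =
      {β | ∀ i, (∀ f ∈ F, τ i f = 0) → τ i β ≤ τ i α} := by
  classical
  obtain ⟨lam, hlam, hFeq⟩ := hF
  have hQmem : ∀ x, x ∈ Q ↔ ∀ i, 0 ≤ τ i x := by
    intro x
    have : x ∈ (Q : Set (Fin d → ℤ)) ↔ x ∈ {β | ∀ i, 0 ≤ τ i β} := by rw [hQ]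
    simpa using this
  have hF0 : (0 : Fin d → ℤ) ∈ F := by
    rw [hFeq]; exact ⟨Q.zero_mem, map_zero lam⟩
  have hFQ : ∀ x ∈ F, x ∈ Q := by
    intro x hx; rw [hFeq] at hx; exact hx.1
  have hFadd : ∀ x y : Fin d → ℤ, x ∈ F → y ∈ F → x + y ∈ F := by
    intro x y hx hy
    rw [hFeq] at hx hy ⊢
    exact ⟨Q.add_mem hx.1 hy.1, by rw [map_add, hx.2, hy.2]; ring⟩
  ext β
  simp only [Set.mem_vadd_set, Set.mem_sub, Set.mem_setOf_eq]
  constructor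
  · rintro ⟨x, ⟨f, hf, q, hq, rfl⟩, rfl⟩
    intro i hvan
    have h1 : τ i f = 0 := hvan f hf
    have h2 : 0 ≤ τ i q := (hQmem q).mp hq i
    have hv : α +ᵥ (f - q) = α + (f - q) := rfl
    rw [hv, map_add, map_sub, h1]
    linarith
  · intro hβ
    have hg : ∀ i, ∃ g, g ∈ F ∧ ((∀ f ∈ F, τ i f = 0) ∨ 1 ≤ τ i g) := by
      intro i
      by_cases h : ∀ f ∈ F, τ i f = 0
      · exact ⟨0, hF0, Or.inl h⟩
      · push_neg at h
        obtain ⟨f, hf, hne⟩ := h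
        have : 0 ≤ τ i f := (hQmem f).mp (hFQ f hf) i
        exact ⟨f, hf, Or.inr (by omega)⟩
    choose g hgF hgP using hg
    set s : Fin d → ℤ := ∑ i, g i with hs
    have hsF : s ∈ F :=
      Finset.sum_induction g (· ∈ F) hFadd hF0 (fun i _ => hgF i)
    have hsQ : s ∈ Q := hFQ s hsF
    have hslow : ∀ i, 0 ≤ τ i s := (hQmem s).mp hsQ
    have hsge : ∀ i, ¬ (∀ f ∈ F, τ i f = 0) → 1 ≤ τ i s := by
      intro i hi
      have h1 : 1 ≤ τ i (g i) := (hgP i).resolve_left hi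
      have : τ i s = ∑ j, τ i (g j) := by rw [hs, map_sum]
      rw [this]
      calc (1 : ℤ) ≤ τ i (g i) := h1
        _ ≤ ∑ j, τ i (g j) :=
          Finset.single_le_sum (fun j _ => (hQmem (g j)).mp (hFQ (g j) (hgF j)) i)
            (Finset.mem_univ i)
    set N : ℕ := Finset.univ.sup (fun i => (τ i β - τ i α).toNat) with hN
    have hNle : ∀ i : Fin n, τ i β - τ i α ≤ (N : ℤ) := by
      intro i
      have h1 : (τ i β - τ i α).toNat ≤ N := by
        rw [hN]; exact Finset.le_sup (f := fun i => (τ i β - τ i α).toNat) (Finset.mem_univ i)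
      omega
    set f : Fin d → ℤ := N • s with hf
    have hfF : f ∈ F := by
      rw [hFeq]
      constructor
      · exact AddSubmonoid.nsmul_mem Q hsQ N
      · have hls : lam s = 0 := by rw [hFeq] at hsF; exact hsF.2
        rw [hf, map_nsmul, hls, smul_zero]
    have hτf : ∀ i, τ i f = (N : ℤ) * τ i s := by
      intro i; rw [hf, map_nsmul]; push_cast; ring
    have hqQ : α + f - β ∈ Q := by
      rw [hQmem]
      intro i
      simp only [map_add, map_sub]
      by_cases hi : ∀ x ∈ F, τ i x = 0
      · have h1 : τ i f = 0 := hi f hfF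
        have h2 := hβ i hi
        linarith
      · have h1 : 1 ≤ τ i s := hsge i hi
        have h2 : (N : ℤ) * 1 ≤ (N : ℤ) * τ i s :=
          mul_le_mul_of_nonneg_left h1 (by positivity)
        have h3 := hNle i
        have h4 := hτf i
        linarith
    refine ⟨f - (α + f - β), ⟨f, hfF, α + f - β, hqQ, rfl⟩, ?_⟩
    show α + (f - (α + f - β)) = β
    abel
end

section
/- Let Q ⊆ ℤ^d be an affine semigroup that is saturated, presented by facet functionals as Q = {β ∈ ℤ^d : τ_i(β) ≥ 0 for all i = 1,…,n}. Then for any face F of Q and any element a ∈ Q, the complement of a + F − Q inside Q is the union of the intersections of Q with the translated open half-spaces corresponding to functionals vanishing on F; that is, Q ∖ (a + F − Q) = ⋃_{i : τ_i vanishes identically on F} {b ∈ Q : τ_i(b) > τ_i(a)}. -/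
open Pointwise

/-- For a saturated affine semigroup `Q` presented by facet functionals,
a face `F` of `Q`, and `a ∈ Q`:
`Q ∖ (a + F − Q) = ⋃_{i : τ_i|_F = 0} {b ∈ Q : τ_i(b) > τ_i(a)}`. -/
theorem stmt1 {d n : ℕ} (Q : AddSubmonoid (Fin d → ℤ)) (hfg : Q.FG)
    (τ : Fin n → ((Fin d → ℤ) →ₗ[ℤ] ℤ))
    (hQ : (Q : Set (Fin d → ℤ)) = {β | ∀ i, 0 ≤ τ i β})
    (F : Set (Fin d → ℤ)) (hF : IsFaceOf (Q : Set (Fin d → ℤ)) F)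
    (a : Fin d → ℤ) (ha : a ∈ Q) :
    (Q : Set (Fin d → ℤ)) \ (a +ᵥ (F - (Q : Set (Fin d → ℤ)))) =
      ⋃ i ∈ {i : Fin n | ∀ f ∈ F, τ i f = 0}, {b | b ∈ Q ∧ τ i a < τ i b} := by
  obtain ⟨lam, hlam, hFdef⟩ := hF
  have hQ' : ∀ x : Fin d → ℤ, x ∈ Q ↔ ∀ i, 0 ≤ τ i x := by
    intro x
    constructor
    · intro hx
      have : x ∈ (Q : Set (Fin d → ℤ)) := hx
      rw [hQ] at this; exact this
    · intro hx
      have : x ∈ ({β | ∀ i, 0 ≤ τ i β} : Set (Fin d → ℤ)) := hx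
      rw [← hQ] at this; exact this
  have hFQ : ∀ x ∈ F, x ∈ Q := by
    intro x hx; rw [hFdef] at hx; exact hx.1
  have h0F : (0 : Fin d → ℤ) ∈ F := by
    rw [hFdef]; exact ⟨Q.zero_mem, map_zero lam⟩
  have hFadd : ∀ x ∈ F, ∀ y ∈ F, x + y ∈ F := by
    intro x hx y hy
    rw [hFdef] at hx hy ⊢
    exact ⟨Q.add_mem hx.1 hy.1, by rw [map_add, hx.2, hy.2, add_zero]⟩
  ext b
  simp only [Set.mem_diff, Set.mem_iUnion, Set.mem_setOf_eq, SetLike.mem_coe]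
  constructor
  · rintro ⟨hbQ, hb⟩
    by_contra hcon
    push_neg at hcon
    have hle : ∀ i : Fin n, (∀ f ∈ F, τ i f = 0) → τ i b ≤ τ i a := by
      intro i hi
      by_contra hlt
      push_neg at hlt
      exact absurd hlt (not_lt.2 (hcon i hi hbQ))
    -- pick witnesses
    have key : ∀ i : Fin n, ∃ g, g ∈ F ∧ ((∀ f ∈ F, τ i f = 0) ∨ 0 < τ i g) := by
      intro i
      by_cases hi : ∀ f ∈ F, τ i f = 0
      · exact ⟨0, h0F, Or.inl hi⟩
      · push_neg at hi
        obtain ⟨g, hgF, hg⟩ := hi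
        have : 0 ≤ τ i g := (hQ' g).1 (hFQ g hgF) i
        exact ⟨g, hgF, Or.inr (lt_of_le_of_ne this (Ne.symm hg))⟩
    choose g hgF hg using key
    set c : Fin n → ℕ := fun i => (τ i b - τ i a).toNat with hc
    set f : Fin d → ℤ := ∑ i, c i • g i with hf
    have hfF : f ∈ F := by
      rw [hf]
      classical
      refine Finset.sum_induction _ (· ∈ F) (fun x y hx hy => hFadd x hx y hy) h0F ?_
      intro i _
      induction (c i) with
      | zero => simpa using h0F
      | succ k ih =>
        rw [succ_nsmul]
        exact hFadd _ ih _ (hgF i)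
    have hqQ : a + f - b ∈ Q := by
      rw [hQ']
      intro j
      have hτf : τ j f = ∑ i, (c i : ℤ) * τ j (g i) := by
        rw [hf, map_sum]
        congr 1; funext i
        rw [map_nsmul, nsmul_eq_mul]
      have habq : τ j (a + f - b) = τ j a + τ j f - τ j b := by
        simp [map_sub, map_add]
      rw [habq]
      rcases hg j with hj | hj
      · have : τ j f = 0 := by
          rw [hτf]
          apply Finset.sum_eq_zero
          intro i _
          rw [hj _ (hgF i), mul_zero]
        rw [this]
        have := hle j hj
        omega
      · have hterm : ∀ i ∈ Finset.univ, (0:ℤ) ≤ (c i : ℤ) * τ j (g i) := by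
          intro i _
          exact mul_nonneg (Int.natCast_nonneg _) ((hQ' _).1 (hFQ _ (hgF i)) j)
        have hsingle : (c j : ℤ) * τ j (g j) ≤ τ j f := by
          rw [hτf]
          exact Finset.single_le_sum hterm (Finset.mem_univ j)
        have h1 : (c j : ℤ) ≤ (c j : ℤ) * τ j (g j) := by
          nlinarith
        have h2 : τ j b - τ j a ≤ (c j : ℤ) := Int.self_le_toNat _
        omega
    exact hb ⟨f - (a + f - b), Set.sub_mem_sub hfF hqQ, by simp [vadd_eq_add]; abel⟩
  · rintro ⟨i, hi, hbQ, hlt⟩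
    refine ⟨hbQ, ?_⟩
    rintro ⟨y, ⟨fe, hfe, q, hq, rfl⟩, rfl⟩
    have hq0 : 0 ≤ τ i q := (hQ' q).1 hq i
    have hfe0 : τ i fe = 0 := hi fe hfe
    simp only [vadd_eq_add, map_add, map_sub, hfe0] at hlt
    omega
end

section
/- Let ρ_1,…,ρ_m ∈ ℤ^d, let C = {Σ_i c_i ρ_i : c_i ∈ ℝ, c_i ≥ 0} ⊆ ℝ^d be the real cone they generate, assume C is pointed (C ∩ (−C) = {0}), and let Q = C ∩ ℤ^d (so Q is a saturated semigroup containing each ρ_i). Let G = {Σ_i t_i ρ_i : 0 ≤ t_i ≤ 1} be the zonotope that is the Minkowski sum of the segments [0, ρ_i]. Then for every α ∈ ℝ^d, the lattice points in α + G generate the set of lattice points of α + C as a Q-set: (α + C) ∩ ℤ^d = ((α + G) ∩ ℤ^d) + Q, i.e., every lattice point β ∈ α + C can be written β = γ + q with γ a lattice point of α + G and q ∈ Q. -/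
open Pointwise

/-- Coercion of a lattice point in `ℤ^d` to a point of `ℝ^d`. -/
def toR {d : ℕ} (x : Fin d → ℤ) : Fin d → ℝ := fun i => (x i : ℝ)

lemma toR_add {d : ℕ} (a b : Fin d → ℤ) : toR (a + b) = toR a + toR b := by
  funext i; simp [toR]

lemma toR_sub {d : ℕ} (a b : Fin d → ℤ) : toR (a - b) = toR a - toR b := by
  funext i; simp [toR]

lemma toR_sum_smul {d m : ℕ} (n : Fin m → ℤ) (ρ : Fin m → (Fin d → ℤ)) :
    toR (∑ i, n i • ρ i) = ∑ i, (n i : ℝ) • toR (ρ i) := by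
  funext j
  simp [toR, Finset.sum_apply]

/-- zonotope lemma.  Let `C` be the pointed real cone generated by
`ρ_1, …, ρ_m ∈ ℤ^d`, `Q = C ∩ ℤ^d`, and `G` the zonotope generated by the `ρ_i`.
Then for every `α ∈ ℝ^d` the lattice points in `α + G` generate the lattice points
of `α + C` as a `Q`-set: `(α + C) ∩ ℤ^d = ((α + G) ∩ ℤ^d) + Q`. -/
theorem stmt2 {d m : ℕ} (ρ : Fin m → (Fin d → ℤ))
    (C : Set (Fin d → ℝ))
    (hC : C = {y | ∃ c : Fin m → ℝ, (∀ i, 0 ≤ c i) ∧ y = ∑ i, c i • toR (ρ i)})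
    (hpointed : C ∩ (-C) = {0})
    (Q : Set (Fin d → ℤ)) (hQ : Q = {q | toR q ∈ C})
    (G : Set (Fin d → ℝ))
    (hG : G = {y | ∃ t : Fin m → ℝ, (∀ i, 0 ≤ t i ∧ t i ≤ 1) ∧ y = ∑ i, t i • toR (ρ i)})
    (α : Fin d → ℝ) :
    {β : Fin d → ℤ | toR β ∈ α +ᵥ C} = {γ : Fin d → ℤ | toR γ ∈ α +ᵥ G} + Q := by
  subst hC hQ hG
  ext β
  simp only [Set.mem_setOf_eq, Set.mem_add, Set.mem_vadd_set, vadd_eq_add]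
  constructor
  · rintro ⟨y, ⟨c, hc, rfl⟩, hxy⟩
    set n : Fin m → ℤ := fun i => ⌊c i⌋ with hn
    refine ⟨β - ∑ i, n i • ρ i, ⟨∑ i, (c i - (n i : ℝ)) • toR (ρ i),
      ⟨fun i => (c i - (n i : ℝ)), fun i => ⟨?_, ?_⟩, rfl⟩, ?_⟩,
      ∑ i, n i • ρ i, ⟨fun i => (n i : ℝ), fun i => ?_, by simpa using toR_sum_smul n ρ⟩, by abel⟩
    · have := Int.floor_le (c i); simp only [hn]; linarith
    · have := Int.lt_floor_add_one (c i); simp only [hn]; linarith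
    · rw [toR_sub, ← hxy, toR_sum_smul]
      simp only [sub_smul]
      rw [Finset.sum_sub_distrib]
      abel
    · simpa [hn] using Int.floor_nonneg.mpr (hc i)
  · rintro ⟨γ, ⟨y, ⟨t, ht, rfl⟩, hγ⟩, q, ⟨c, hc, hq⟩, rfl⟩
    refine ⟨∑ i, (t i + c i) • toR (ρ i), ⟨fun i => (t i + c i),
      fun i => add_nonneg (ht i).1 (hc i), rfl⟩, ?_⟩
    rw [toR_add, ← hγ, hq]
    simp only [add_smul, Finset.sum_add_distrib]
    abel
end

section
/- Let Q ⊆ ℤ^d be a saturated affine semigroup: Q = C ∩ ℤ^d where C ⊆ ℝ^d is the pointed real cone generated by vectors ρ_1,…,ρ_m ∈ ℤ^d, and suppose Q = {β ∈ ℤ^d : τ_i(β) ≥ 0 for all i = 1,…,n} for ℤ-linear functionals τ_1,…,τ_n. Let G = {Σ_i t_i ρ_i : 0 ≤ t_i ≤ 1} be the zonotope of the ρ_i. Then for every face F of Q and every a ∈ Q, each b ∈ Q with b ∉ a + F − Q can be written b = b₀ + q with q ∈ Q and b₀ a lattice point of (({x ∈ ℝ^d : τ_i(x) = τ_i(a)})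 ∩ ℝ₊D) + G, for some index i with τ_i vanishing identically on F and some face D of Q with D ∩ (Q ∩ ker τ_i) = {0}. (In other words, the monomial ideal k{Q ∖ (a + F − Q)} is generated by monomials whose exponents are lattice points of finitely many explicitly described polytopes.) -/
open Pointwise

/-- The `ℝ`-linear extension of a `ℤ`-linear functional on `ℤ^d` to `ℝ^d`. -/
def extR {d : ℕ} (τ : (Fin d → ℤ) →ₗ[ℤ] ℤ) : (Fin d → ℝ) → ℝ :=
  fun y => ∑ i, y i * (τ (Pi.single i 1) : ℝ)

/-- `ℝ₊S`: the set of nonnegative real combinations of elements of `S ⊆ ℝ^d`. -/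
def nonnegSpan {d : ℕ} (S : Set (Fin d → ℝ)) : Set (Fin d → ℝ) :=
  {y | ∃ (N : ℕ) (v : Fin N → (Fin d → ℝ)) (c : Fin N → ℝ),
    (∀ i, v i ∈ S) ∧ (∀ i, 0 ≤ c i) ∧ y = ∑ i, c i • v i}

/-!
Pick `τ_i` vanishing on `F` with `τ_i a < τ_i b`; if there were none, adding a large multiple
of a relative-interior point of `F` to `a` would exceed `b`, i.e. `b ∈ a + F - Q`. Subtract from
`b` as much of `Q` as possible while keeping `τ_i ≥ τ_i a`, obtaining a minimal `b₀`. In the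
rational polytope `{x : 0 ≤ τ x ≤ τ b₀, τ_i x = τ_i a}` take `x` with a maximal set of vanishing
constraints; these cut out a face `D` with `x ∈ ℝ₊D`, and `D ∩ ker τ_i = {0}` since otherwise
moving `x` along `D ∩ ker τ_i` would make one more constraint vanish. Finally `b₀ - x` lies in the
cone, so it is an integral combination of the `ρ_l` plus a point `g` of the zonotope; minimality
of `b₀` kills the integral part, whence `b₀ = x + g`.
-/

section LinearExt

variable {d : ℕ}

def linearExt (R : Type*) [CommRing R] (τ : (Fin d → ℤ) →ₗ[ℤ] ℤ) : Module.Dual R (Fin d → R) :=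
  Fintype.linearCombination R fun k => (τ (Pi.single k 1) : R)

lemma linearExt_map {R S : Type*} [CommRing R] [CommRing S] (f : R →+* S)
    (τ : (Fin d → ℤ) →ₗ[ℤ] ℤ) (x : Fin d → R) :
    linearExt S τ (fun k => f (x k)) = f (linearExt R τ x) := by
  simp [linearExt, Fintype.linearCombination_apply, map_sum]

lemma linearExt_int (τ : (Fin d → ℤ) →ₗ[ℤ] ℤ) : linearExt ℤ τ = τ := by
  ext k
  simp [linearExt]

lemma linearExt_intCast (R : Type*) [CommRing R] (τ : (Fin d → ℤ) →ₗ[ℤ] ℤ) (w : Fin d → ℤ) :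
    linearExt R τ (fun k => (w k : R)) = τ w := by
  simpa [linearExt_int] using linearExt_map (Int.castRingHom R) τ w

lemma linearExt_ratCast (τ : (Fin d → ℤ) →ₗ[ℤ] ℤ) (x : Fin d → ℚ) :
    linearExt ℝ τ (fun k => (x k : ℝ)) = linearExt ℚ τ x :=
  linearExt_map (Rat.castHom ℝ) τ x

lemma linearExt_toR (τ : (Fin d → ℤ) →ₗ[ℤ] ℤ) (w : Fin d → ℤ) : linearExt ℝ τ (toR w) = τ w :=
  linearExt_intCast ℝ τ w

lemma extR_eq_linearExt (τ : (Fin d → ℤ) →ₗ[ℤ] ℤ) : extR τ = linearExt ℝ τ := by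
  ext y
  simp [extR, linearExt, Fintype.linearCombination_apply]

lemma toR_injective : Function.Injective (toR (d := d)) := fun _ _ h =>
  funext fun k => by simpa [toR] using congrFun h k

end LinearExt

section Semigroup

variable {d n : ℕ} (τ : Fin n → (Fin d → ℤ) →ₗ[ℤ] ℤ)

def semigroupOf : AddSubmonoid (Fin d → ℤ) where
  carrier := {β | ∀ j, 0 ≤ τ j β}
  add_mem' hx hy j := by simpa only [map_add] using add_nonneg (hx j) (hy j)
  zero_mem' j := by simp

variable {τ}

lemma mem_semigroupOf {β : Fin d → ℤ} : β ∈ semigroupOf τ ↔ ∀ j, 0 ≤ τ j β := Iff.rfl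

lemma isFaceOf_semigroupOf (s : Finset (Fin n)) :
    IsFaceOf (semigroupOf τ) {q | q ∈ semigroupOf τ ∧ ∀ j ∈ s, τ j q = 0} := by
  refine ⟨∑ j ∈ s, τ j, fun q hq => ?_, Set.ext fun q => and_congr_right fun hq => ?_⟩
  · simpa using Finset.sum_nonneg fun j _ => hq j
  · simpa using (Finset.sum_eq_zero_iff_of_nonneg fun j _ => hq j).symm

lemma IsFaceOf.subset {Q F : Set (Fin d → ℤ)} (hF : IsFaceOf Q F) : F ⊆ Q := by
  obtain ⟨_, _, rfl⟩ := hF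
  exact fun _ h => h.1

lemma IsFaceOf.sum_mem {Q : AddSubmonoid (Fin d → ℤ)} {F : Set (Fin d → ℤ)}
    (hF : IsFaceOf Q F) {ι : Type*} (s : Finset ι) {f : ι → Fin d → ℤ} (hf : ∀ i ∈ s, f i ∈ F) :
    ∑ i ∈ s, f i ∈ F := by
  obtain ⟨lam, -, rfl⟩ := hF
  exact ⟨Q.sum_mem fun i hi => (hf i hi).1,
    by simpa using Finset.sum_eq_zero fun i hi => (hf i hi).2⟩

lemma IsFaceOf.zero_mem {Q : AddSubmonoid (Fin d → ℤ)} {F : Set (Fin d → ℤ)}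
    (hF : IsFaceOf Q F) : 0 ∈ F := by
  simpa using hF.sum_mem ∅ (f := fun _ : Unit => 0) (by simp)

lemma IsFaceOf.nsmul_mem {Q : AddSubmonoid (Fin d → ℤ)} {F : Set (Fin d → ℤ)}
    (hF : IsFaceOf Q F) {f : Fin d → ℤ} (hf : f ∈ F) (N : ℕ) : N • f ∈ F := by
  simpa using hF.sum_mem (Finset.range N) fun _ _ => hf

lemma IsFaceOf.exists_mem_forall_pos {F : Set (Fin d → ℤ)} (hF : IsFaceOf (semigroupOf τ) F) :
    ∃ f ∈ F, ∀ j, (∃ f' ∈ F, τ j f' ≠ 0) → 0 < τ j f := by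
  classical
  have hwit : ∀ j, ∃ g ∈ F, (∃ f' ∈ F, τ j f' ≠ 0) → 0 < τ j g := by
    intro j
    by_cases h : ∃ f' ∈ F, τ j f' ≠ 0
    · obtain ⟨f', hf', hne⟩ := h
      exact ⟨f', hf', fun _ => lt_of_le_of_ne (hF.subset hf' j) hne.symm⟩
    · exact ⟨0, hF.zero_mem, fun h' => absurd h' h⟩
  choose g hgF hg using hwit
  refine ⟨∑ k, g k, hF.sum_mem _ fun k _ => hgF k, fun j hj => ?_⟩
  rw [map_sum]
  exact (hg j hj).trans_le <|
    Finset.single_le_sum (fun k _ => hF.subset (hgF k) j) (Finset.mem_univ j)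

lemma IsFaceOf.exists_lt_of_notMem_vadd_sub {F : Set (Fin d → ℤ)}
    (hF : IsFaceOf (semigroupOf τ) F) {a b : Fin d → ℤ} (hb : b ∉ a +ᵥ (F - semigroupOf τ)) :
    ∃ i, (∀ f ∈ F, τ i f = 0) ∧ τ i a < τ i b := by
  by_contra! hab
  obtain ⟨f, hfF, hf⟩ := hF.exists_mem_forall_pos
  set N : ℕ := ∑ j, (τ j b - τ j a).toNat
  have hq : a + N • f - b ∈ semigroupOf τ := fun j => by
    have hN : τ j b - τ j a ≤ N := by
      have := Finset.single_le_sum (f := fun j => (τ j b - τ j a).toNat)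
        (fun _ _ => Nat.zero_le _) (Finset.mem_univ j)
      omega
    rw [map_sub, map_add, map_nsmul, nsmul_eq_mul]
    by_cases hj : ∀ f' ∈ F, τ j f' = 0
    · rw [hj f hfF]
      linarith [hab j hj]
    · push Not at hj
      nlinarith [hf j hj]
  exact hb ⟨N • f - (a + N • f - b), Set.sub_mem_sub (hF.nsmul_mem hfF N) hq,
    show a + _ = b by abel⟩

lemma exists_minimal_sub_mem (hτ : ∀ z, (∀ j, τ j z = 0) → z = 0) {S : Set (Fin d → ℤ)}
    (hS : S ⊆ semigroupOf τ) {b : Fin d → ℤ} (hb : b ∈ S) :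
    ∃ b₀ ∈ S, b - b₀ ∈ semigroupOf τ ∧ ∀ p ∈ semigroupOf τ, b₀ - p ∈ S → p = 0 := by
  obtain ⟨b₀, ⟨hb₀, hbb₀⟩, hmin⟩ := (measure fun z => (∑ j, τ j z).toNat).wf.has_min
    {c | c ∈ S ∧ b - c ∈ semigroupOf τ} ⟨b, hb, by simp [(semigroupOf τ).zero_mem]⟩
  refine ⟨b₀, hb₀, hbb₀, fun p hp hpS => hτ p fun j => ?_⟩
  have hle := hmin (b₀ - p)
    ⟨hpS, by rw [sub_sub_eq_add_sub, add_sub_right_comm]; exact add_mem hbb₀ hp⟩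
  have hp0 : ∑ j, τ j p = 0 := by
    have h₁ := Finset.sum_nonneg fun j (_ : j ∈ Finset.univ) => hS hpS j
    have h₂ := Finset.sum_nonneg fun j (_ : j ∈ Finset.univ) => hp j
    change ¬ (∑ j, τ j (b₀ - p)).toNat < (∑ j, τ j b₀).toNat at hle
    simp only [map_sub, Finset.sum_sub_distrib] at hle h₁
    omega
  exact (Finset.sum_eq_zero_iff_of_nonneg fun j _ => hp j).mp hp0 j (Finset.mem_univ j)

end Semigroup

section ActiveSet

variable {K V ι : Type*} [Field K] [LinearOrder K] [IsStrictOrderedRing K] [AddCommGroup V]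
  [Module K V] [Fintype ι] (φ : ι → Module.Dual K V)

def activeSet (x : V) : Finset ι := {j | φ j x = 0}

variable {φ}

lemma exists_activeSet_ssubset {i : ι} {x z : V}
    (hx : ∀ j, 0 ≤ φ j x) (hz : ∀ j, 0 ≤ φ j z) (hzi : φ i z = 0)
    (hzx : ∀ j, φ j x = 0 → φ j z = 0) (hz0 : ∃ j, φ j z ≠ 0) :
    ∃ x', (∀ j, 0 ≤ φ j x') ∧ (∀ j, φ j x' ≤ φ j x) ∧ φ i x' = φ i x ∧
      activeSet φ x ⊂ activeSet φ x' := by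
  classical
  set pos : Finset ι := {j | φ j z ≠ 0}
  obtain ⟨k, hk, hkmin⟩ := Finset.exists_min_image pos (fun j => φ j x / φ j z)
    (by obtain ⟨j, hj⟩ := hz0; exact ⟨j, by simpa [pos] using hj⟩)
  simp only [pos, Finset.mem_filter, Finset.mem_univ, true_and] at hk hkmin
  have hxpos : ∀ j, φ j z ≠ 0 → 0 < φ j x := fun j hj =>
    (hx j).lt_of_ne fun h => hj (hzx j h.symm)
  set ε := φ k x / φ k z
  have hε : 0 ≤ ε := div_nonneg (hx k) (hz k)
  have hφ : ∀ j, φ j (x - ε • z) = φ j x - ε * φ j z := fun j => by simp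
  refine ⟨x - ε • z, fun j => ?_, fun j => ?_, by simp [hzi], ?_⟩
  · rw [hφ, sub_nonneg]
    by_cases hj : φ j z = 0
    · simpa [hj] using hx j
    · have hzj : 0 < φ j z := (hz j).lt_of_ne (Ne.symm hj)
      calc ε * φ j z ≤ φ j x / φ j z * φ j z := by gcongr; exact hkmin j hj
        _ = φ j x := div_mul_cancel₀ _ hj
  · rw [hφ]
    linarith [mul_nonneg hε (hz j)]
  · rw [Finset.ssubset_iff_of_subset]
    · refine ⟨k, ?_, ?_⟩
      · simp [activeSet, hφ, ε, div_mul_cancel₀ _ hk]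
      · simpa [activeSet] using (hxpos k hk).ne'
    · intro j hj
      simp only [activeSet, Finset.mem_filter, Finset.mem_univ, true_and] at hj ⊢
      simp [hφ, hj, hzx j hj]

/-- Take `x` in the slice with a maximal active set: a `z` violating the conclusion would let
`x - ε • z` make one more constraint vanish (`exists_activeSet_ssubset`). -/
lemma exists_mem_slice_face_inter_ker_trivial {i : ι} {y : V} {α : K}
    (hy : ∀ j, 0 ≤ φ j y) (hα : 0 ≤ α) (hαy : α ≤ φ i y) :
    ∃ x, (∀ j, 0 ≤ φ j x) ∧ (∀ j, φ j x ≤ φ j y) ∧ φ i x = α ∧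
      ∀ z, (∀ j, 0 ≤ φ j z) → φ i z = 0 → (∀ j, φ j x = 0 → φ j z = 0) → ∀ j, φ j z = 0 := by
  set P := {x | (∀ j, 0 ≤ φ j x) ∧ (∀ j, φ j x ≤ φ j y) ∧ φ i x = α}
  have hP : (α / φ i y) • y ∈ P := by
    have hs : 0 ≤ α / φ i y := div_nonneg hα (hα.trans hαy)
    have hs1 : α / φ i y ≤ 1 := div_le_one_of_le₀ hαy (hα.trans hαy)
    refine ⟨fun j => ?_, fun j => ?_, ?_⟩
    · simpa using mul_nonneg hs (hy j)
    · simpa using mul_le_of_le_one_left (hy j) hs1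
    · rcases (hα.trans hαy).eq_or_lt with h | h
      · simp [← h, le_antisymm (h ▸ hαy) hα]
      · simp [div_mul_cancel₀ _ h.ne']
  obtain ⟨x, ⟨hx, hxy, hxi⟩, hmax⟩ :=
    (measure fun x => Fintype.card ι - (activeSet φ x).card).wf.has_min P ⟨_, hP⟩
  refine ⟨x, hx, hxy, hxi, fun z hz hzi hzx => ?_⟩
  by_contra! hz0
  obtain ⟨x', hx', hx'x, hx'i, hss⟩ := exists_activeSet_ssubset hx hz hzi hzx hz0
  refine hmax x' ⟨hx', fun j => (hx'x j).trans (hxy j), hx'i.trans hxi⟩ ?_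
  have := Finset.card_lt_card hss
  have := (activeSet φ x').card_le_univ
  show Fintype.card ι - (activeSet φ x').card < Fintype.card ι - (activeSet φ x).card
  omega

end ActiveSet

section Cone

variable {d m : ℕ} (ρ : Fin m → Fin d → ℤ)

def realCone : Set (Fin d → ℝ) :=
  {y | ∃ c : Fin m → ℝ, (∀ i, 0 ≤ c i) ∧ y = ∑ i, c i • toR (ρ i)}

def zonotope : Set (Fin d → ℝ) :=
  {y | ∃ t : Fin m → ℝ, (∀ i, 0 ≤ t i ∧ t i ≤ 1) ∧ y = ∑ i, t i • toR (ρ i)}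

variable {ρ}

lemma smul_mem_realCone {r : ℝ} (hr : 0 ≤ r) {y : Fin d → ℝ} (hy : y ∈ realCone ρ) :
    r • y ∈ realCone ρ := by
  obtain ⟨c, hc, rfl⟩ := hy
  exact ⟨r • c, fun i => mul_nonneg hr (hc i), by simp [Finset.smul_sum, smul_smul]⟩

lemma zonotope_subset_realCone : zonotope ρ ⊆ realCone ρ := fun _ ⟨t, ht, hy⟩ =>
  ⟨t, fun i => (ht i).1, hy⟩

lemma toR_sum_nsmul (k : Fin m → ℕ) : toR (∑ l, k l • ρ l) = ∑ l, (k l : ℝ) • toR (ρ l) := by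
  ext; simp [toR]

lemma exists_eq_toR_add_zonotope {y : Fin d → ℝ} (hy : y ∈ realCone ρ) :
    ∃ k : Fin m → ℕ, ∃ g ∈ zonotope ρ, y = toR (∑ l, k l • ρ l) + g := by
  obtain ⟨c, hc, rfl⟩ := hy
  refine ⟨fun l => ⌊c l⌋₊, ∑ l, Int.fract (c l) • toR (ρ l),
    ⟨_, fun l => ⟨Int.fract_nonneg _, (Int.fract_lt_one _).le⟩, rfl⟩, ?_⟩
  rw [toR_sum_nsmul, ← Finset.sum_add_distrib]
  refine Finset.sum_congr rfl fun l _ => ?_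
  rw [← add_smul, Int.fract, ← Int.natCast_floor_eq_floor (hc l)]
  push_cast
  ring_nf

lemma linearExt_nonneg_of_mem_realCone {τ : (Fin d → ℤ) →ₗ[ℤ] ℤ} (hρ : ∀ l, 0 ≤ τ (ρ l))
    {y : Fin d → ℝ} (hy : y ∈ realCone ρ) : 0 ≤ linearExt ℝ τ y := by
  obtain ⟨c, hc, rfl⟩ := hy
  simp only [map_sum, map_smul, smul_eq_mul]
  exact Finset.sum_nonneg fun l _ => mul_nonneg (hc l) (by rw [linearExt_toR]; exact_mod_cast hρ l)

end Cone

section Rational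

variable {d n m : ℕ} {τ : Fin n → (Fin d → ℤ) →ₗ[ℤ] ℤ} {ρ : Fin m → Fin d → ℤ}

lemma exists_intCast_eq_nat_smul (x : Fin d → ℚ) :
    ∃ N : ℕ, 0 < N ∧ ∃ w : Fin d → ℤ, (fun k => (w k : ℚ)) = (N : ℚ) • x := by
  classical
  refine ⟨∏ k, (x k).den, Finset.prod_pos fun k _ => (x k).pos,
    fun k => (x k).num * ∏ l ∈ Finset.univ.erase k, ((x l).den : ℤ), funext fun k => ?_⟩
  simp only [Pi.smul_apply, smul_eq_mul]
  rw [← Finset.mul_prod_erase _ _ (Finset.mem_univ k)]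
  push_cast
  rw [← Rat.mul_den_eq_num]
  ring

lemma exists_ratCast_eq_inv_smul_toR (x : Fin d → ℚ) :
    ∃ N : ℕ, 0 < N ∧ ∃ w : Fin d → ℤ,
      (∀ σ : (Fin d → ℤ) →ₗ[ℤ] ℤ, (σ w : ℚ) = N * linearExt ℚ σ x) ∧
      (fun k => (x k : ℝ)) = (N : ℝ)⁻¹ • toR w := by
  obtain ⟨N, hN, w, hw⟩ := exists_intCast_eq_nat_smul x
  refine ⟨N, hN, w, fun σ => by rw [← linearExt_intCast ℚ σ w, hw, map_smul, smul_eq_mul], ?_⟩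
  funext k
  have hk : (w k : ℝ) = N * (x k : ℝ) := by exact_mod_cast congrFun hw k
  simp only [Pi.smul_apply, smul_eq_mul, toR, hk]
  field_simp

lemma ratCast_mem_realCone (hcone : ∀ u ∈ semigroupOf τ, toR u ∈ realCone ρ) {x : Fin d → ℚ}
    (hx : ∀ j, 0 ≤ linearExt ℚ (τ j) x) : (fun k => (x k : ℝ)) ∈ realCone ρ := by
  obtain ⟨N, -, w, hw, hxw⟩ := exists_ratCast_eq_inv_smul_toR x
  have hwQ : w ∈ semigroupOf τ := fun j => by
    have : (0 : ℚ) ≤ τ j w := by rw [hw]; exact mul_nonneg N.cast_nonneg (hx j)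
    exact_mod_cast this
  rw [hxw]
  exact smul_mem_realCone (by positivity) (hcone w hwQ)

variable (τ) in
def activeFace (x : Fin d → ℚ) : Set (Fin d → ℤ) :=
  {q | q ∈ semigroupOf τ ∧ ∀ j ∈ activeSet (fun j => linearExt ℚ (τ j)) x, τ j q = 0}

lemma ratCast_mem_nonnegSpan {x : Fin d → ℚ} (hx : ∀ j, 0 ≤ linearExt ℚ (τ j) x) :
    (fun k => (x k : ℝ)) ∈ nonnegSpan (toR '' activeFace τ x) := by
  obtain ⟨N, -, w, hw, hxw⟩ := exists_ratCast_eq_inv_smul_toR x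
  have hwD : w ∈ activeFace τ x := by
    refine ⟨fun j => ?_, fun j hj => ?_⟩
    · have : (0 : ℚ) ≤ τ j w := by rw [hw]; exact mul_nonneg N.cast_nonneg (hx j)
      exact_mod_cast this
    · have : (τ j w : ℚ) = 0 := by simp_all [activeSet]
      exact_mod_cast this
  exact ⟨1, fun _ => toR w, fun _ => (N : ℝ)⁻¹, fun _ => ⟨w, hwD, rfl⟩, fun _ => by positivity,
    by simp [hxw]⟩

lemma exists_eq_ratCast_add_zonotope (hρ : ∀ l, ρ l ∈ semigroupOf τ)
    (hcone : ∀ u ∈ semigroupOf τ, toR u ∈ realCone ρ) {b₀ : Fin d → ℤ} {x : Fin d → ℚ}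
    (hxb : ∀ j, linearExt ℚ (τ j) x ≤ τ j b₀)
    (hmin : ∀ p ∈ semigroupOf τ, (∀ j, linearExt ℚ (τ j) x ≤ τ j (b₀ - p)) → p = 0) :
    ∃ g ∈ zonotope ρ, toR b₀ = (fun k => (x k : ℝ)) + g := by
  have hy : ∀ j, 0 ≤ linearExt ℚ (τ j) ((fun k => (b₀ k : ℚ)) - x) := fun j => by
    simpa [linearExt_intCast] using hxb j
  obtain ⟨c, g, hg, hyg⟩ := exists_eq_toR_add_zonotope (ratCast_mem_realCone hcone hy)
  set z₀ := ∑ l, c l • ρ l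
  have hb₀z₀ : toR (b₀ - z₀) = (fun k => (x k : ℝ)) + g := by
    have : toR b₀ = (fun k => (x k : ℝ)) + (toR z₀ + g) := by
      rw [← hyg]; ext; simp [toR]
    rw [show toR (b₀ - z₀) = toR b₀ - toR z₀ by ext; simp [toR], this]
    abel
  have hz₀ : z₀ = 0 := hmin z₀ (sum_mem fun l _ => nsmul_mem (hρ l) _) fun j => by
    have hτj : (τ j (b₀ - z₀) : ℝ) = (linearExt ℚ (τ j) x : ℝ) + linearExt ℝ (τ j) g := by
      rw [← linearExt_toR, hb₀z₀, map_add, linearExt_ratCast]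
    have := linearExt_nonneg_of_mem_realCone (fun l => hρ l j) (zonotope_subset_realCone hg)
    exact_mod_cast (by linarith : (linearExt ℚ (τ j) x : ℝ) ≤ τ j (b₀ - z₀))
  exact ⟨g, hg, by simpa [hz₀] using hb₀z₀⟩

lemma activeFace_inter_eq_zero (hτ : ∀ z, (∀ j, τ j z = 0) → z = 0) {x : Fin d → ℚ} {i : Fin n}
    (hx : ∀ z : Fin d → ℚ, (∀ j, 0 ≤ linearExt ℚ (τ j) z) → linearExt ℚ (τ i) z = 0 →
      (∀ j, linearExt ℚ (τ j) x = 0 → linearExt ℚ (τ j) z = 0) → ∀ j, linearExt ℚ (τ j) z = 0) :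
    activeFace τ x ∩ {q | q ∈ semigroupOf τ ∧ τ i q = 0} = {0} := by
  refine Set.eq_singleton_iff_unique_mem.mpr ⟨⟨⟨zero_mem _, by simp⟩, zero_mem _, by simp⟩, ?_⟩
  rintro z ⟨⟨hz, hzD⟩, -, hzi⟩
  refine hτ z fun j => ?_
  simpa [linearExt_intCast] using hx (fun k => (z k : ℚ))
    (by simpa [linearExt_intCast] using mem_semigroupOf.mp hz) (by simpa [linearExt_intCast] using hzi)
    (fun j hj => by simpa [linearExt_intCast] using hzD j (by simpa [activeSet] using hj)) j

end Rational

lemma eq_zero_of_forall_eq_zero_of_pointed {d n : ℕ} {τ : Fin n → (Fin d → ℤ) →ₗ[ℤ] ℤ}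
    {C : Set (Fin d → ℝ)} (hpointed : C ∩ -C = {0})
    (hQ : (semigroupOf τ : Set (Fin d → ℤ)) = {q | toR q ∈ C}) {z : Fin d → ℤ}
    (hz : ∀ j, τ j z = 0) : z = 0 := by
  have hC : ∀ w, (∀ j, τ j w = 0) → toR w ∈ C := fun w hw => by
    have hw' : w ∈ (semigroupOf τ : Set (Fin d → ℤ)) := fun j => (hw j).ge
    rwa [hQ] at hw'
  have hneg : toR (-z) = -toR z := by ext; simp [toR]
  have hz' : toR z ∈ C ∩ -C :=
    ⟨hC z hz, by rw [Set.mem_neg, ← hneg]; exact hC (-z) (by simpa using hz)⟩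
  rw [hpointed] at hz'
  exact toR_injective (hz'.trans (by ext; simp [toR]))

/-- Let `Q = C ∩ ℤ^d` be a saturated affine semigroup, presented also
as `Q = {β : τ_i(β) ≥ 0 ∀ i}`, with zonotope `G` of the cone generators.  For a face `F`
of `Q` and `a ∈ Q`, every `b ∈ Q` with `b ∉ a + F − Q` can be written `b = b₀ + q` with
`q ∈ Q` and `b₀` a lattice point of `({τ_i = τ_i(a)} ∩ ℝ₊D) + G` for some `i` with
`τ_i|_F = 0` and some face `D` of `Q` with `D ∩ (Q ∩ ker τ_i) = {0}`. -/
theorem stmt4 {d m n : ℕ} (ρ : Fin m → (Fin d → ℤ))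
    (C : Set (Fin d → ℝ))
    (hC : C = {y | ∃ c : Fin m → ℝ, (∀ i, 0 ≤ c i) ∧ y = ∑ i, c i • toR (ρ i)})
    (hpointed : C ∩ (-C) = {0})
    (Q : Set (Fin d → ℤ)) (hQ : Q = {q | toR q ∈ C})
    (τ : Fin n → ((Fin d → ℤ) →ₗ[ℤ] ℤ))
    (hQτ : Q = {β | ∀ i, 0 ≤ τ i β})
    (G : Set (Fin d → ℝ))
    (hG : G = {y | ∃ t : Fin m → ℝ, (∀ i, 0 ≤ t i ∧ t i ≤ 1) ∧ y = ∑ i, t i • toR (ρ i)})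
    (F : Set (Fin d → ℤ)) (hF : IsFaceOf Q F)
    (a : Fin d → ℤ) (ha : a ∈ Q)
    (b : Fin d → ℤ) (hb : b ∈ Q) (hbF : b ∉ a +ᵥ (F - Q)) :
    ∃ i : Fin n, (∀ f ∈ F, τ i f = 0) ∧
      ∃ D : Set (Fin d → ℤ), IsFaceOf Q D ∧
        D ∩ {q | q ∈ Q ∧ τ i q = 0} = {0} ∧
        ∃ (b₀ : Fin d → ℤ) (q : Fin d → ℤ), q ∈ Q ∧ b = b₀ + q ∧
          toR b₀ ∈ ({x | extR (τ i) x = (τ i a : ℝ)} ∩ nonnegSpan (toR '' D)) + G := by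
  obtain rfl : Q = semigroupOf τ := hQτ
  subst hC hG
  have hcone : ∀ u ∈ semigroupOf τ, toR u ∈ realCone ρ := fun u => (Set.ext_iff.mp hQ u).mp
  have hρ : ∀ l, ρ l ∈ semigroupOf τ := fun l => (Set.ext_iff.mp hQ (ρ l)).mpr
    ⟨Pi.single l 1, fun j => by by_cases h : j = l <;> simp [h], by simp [Pi.single_apply]⟩
  have hτ : ∀ z, (∀ j, τ j z = 0) → z = 0 := fun _ =>
    eq_zero_of_forall_eq_zero_of_pointed hpointed hQ
  obtain ⟨i, hiF, hab⟩ := hF.exists_lt_of_notMem_vadd_sub hbF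
  obtain ⟨b₀, ⟨hb₀, hab₀⟩, hbb₀, hmin⟩ := exists_minimal_sub_mem hτ
    (S := {c | c ∈ semigroupOf τ ∧ τ i a ≤ τ i c}) (fun _ h => h.1) ⟨hb, hab.le⟩
  obtain ⟨x, hx, hxb, hxi, hxD⟩ := exists_mem_slice_face_inter_ker_trivial
    (φ := fun j => linearExt ℚ (τ j)) (i := i) (y := fun k => (b₀ k : ℚ)) (α := τ i a)
    (by simpa [linearExt_intCast] using mem_semigroupOf.mp hb₀) (by exact_mod_cast ha i)
    (by simpa [linearExt_intCast] using hab₀)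
  simp only [linearExt_intCast] at hxb
  obtain ⟨g, hg, hb₀g⟩ := exists_eq_ratCast_add_zonotope hρ hcone hxb fun p hp hpx =>
    hmin p hp ⟨fun j => by exact_mod_cast (hx j).trans (hpx j), by exact_mod_cast hxi ▸ hpx i⟩
  have hxH : extR (τ i) (fun k => (x k : ℝ)) = τ i a := by
    rw [extR_eq_linearExt, linearExt_ratCast, hxi, Rat.cast_intCast]
  refine ⟨i, hiF, activeFace τ x, isFaceOf_semigroupOf _, activeFace_inter_eq_zero hτ hxD,
    b₀, b - b₀, hbb₀, by abel, ?_⟩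
  rw [hb₀g]
  exact Set.add_mem_add ⟨hxH, ratCast_mem_nonnegSpan hx⟩ hg
end

section
/- Let C ⊆ ℝ^d be a pointed cone generated by finitely many vectors, let τ : ℝ^d → ℝ be a linear functional with τ ≥ 0 on C, set F = C ∩ ker τ, and fix a real number s ≥ 0. Then every b ∈ C with τ(b) ≥ s lies in b'' + C for some point b'' ∈ C with τ(b'') = s that belongs to an exposed face D of C (that is, D = C ∩ ker λ for some linear functional λ : ℝ^d → ℝ with λ ≥ 0 on C) satisfying D ∩ F = {0}. -/
open Pointwise

/-!
Because `C` is pointed, Farkas' lemma gives a functional `σ` that is positive on the nonzero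
generators, so the slice `{x ∈ C | b - x ∈ C, τ x = s}` is compact and `σ` attains its minimum on
it at some `b''`. No nonzero generator `u` with `τ u = 0` can be subtracted from `b''` inside `C`
(that would stay in the slice and lower `σ`), so Farkas' lemma for the cone generated by `C` and
`-b''` yields a functional that is nonnegative on `C`, vanishes at `b''` and is positive at `u`.
Their sum `λ` exposes a face through `b''` that meets `ker τ` only in `0`.
-/

section

open PointedCone

variable {E : Type*} [AddCommGroup E] [Module ℝ E]

theorem nonneg_of_mem_hull {s : Set E} {φ : E →ₗ[ℝ] ℝ} (hφ : ∀ u ∈ s, 0 ≤ φ u) {x : E}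
    (hx : x ∈ hull ℝ s) : 0 ≤ φ x := by
  induction hx using Submodule.span_induction with
  | mem u hu => exact hφ u hu
  | zero => simp
  | add x y _ _ hx hy => rw [map_add]; exact add_nonneg hx hy
  | smul a x _ hx => rw [← Nonneg.coe_smul, map_smul, smul_eq_mul]; exact mul_nonneg a.2 hx

theorem hull_image {F : Type*} [AddCommGroup F] [Module ℝ F] (T : E →ₗ[ℝ] F) (s : Set E) :
    hull ℝ (T '' s) = (hull ℝ s).map T :=
  Submodule.span_image (T.restrictScalars _)

theorem exists_dual_nonneg_neg_of_notMem_hull (s : Finset E) {z : E}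
    (hz : z ∉ hull ℝ (s : Set E)) :
    ∃ φ : E →ₗ[ℝ] ℝ, (∀ u ∈ s, 0 ≤ φ u) ∧ φ z < 0 := by
  classical
  induction hn : s.card using Nat.strong_induction_on generalizing s z with
  | _ n ih =>
  rcases s.eq_empty_or_nonempty with rfl | ⟨u, hu⟩
  · obtain ⟨φ, hφ⟩ := Module.Projective.exists_dual_ne_zero ℝ (x := z) (by simpa using hz)
    rcases hφ.lt_or_gt with h | h
    · exact ⟨φ, by simp, h⟩
    · exact ⟨-φ, by simp, by simpa using h⟩
  have hs : s = insert u (s.erase u) := (Finset.insert_erase hu).symm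
  have hcard : (s.erase u).card < n := hn ▸ Finset.card_erase_lt_of_mem hu
  obtain ⟨φ, hφ, hφz⟩ := ih _ hcard (s.erase u) (fun h => hz (Submodule.span_mono (by simp) h)) rfl
  by_cases hφu : 0 ≤ φ u
  · refine ⟨φ, fun w hw => ?_, hφz⟩
    by_cases hwu : w = u
    · exact hwu ▸ hφu
    · exact hφ w (Finset.mem_erase.mpr ⟨hwu, hw⟩)
  push Not at hφu
  -- `T` projects along `u` onto `ker φ`, which lets the induction eliminate the generator `u`.
  set T : E →ₗ[ℝ] E := LinearMap.id - (φ u)⁻¹ • φ.smulRight u with hTdef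
  have hT : ∀ x, T x = x - (φ x / φ u) • u := fun x => by
    simp [hTdef, div_eq_inv_mul, smul_smul]
  have hTu : T u = 0 := by rw [hT, div_self hφu.ne, one_smul, sub_self]
  have hTz : T z ∉ hull ℝ ((s.erase u).image T : Set E) := by
    rw [Finset.coe_image, hull_image]
    rintro ⟨y, hy, hTy⟩
    have hφy := nonneg_of_mem_hull (fun w hw => hφ w hw) hy
    apply hz
    rw [hs, Finset.coe_insert, Submodule.mem_span_insert]
    refine ⟨⟨(φ z - φ y) / φ u, div_nonneg_of_nonpos (by linarith) hφu.le⟩, y, hy, ?_⟩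
    rw [LinearMap.restrictScalars_apply, hT, hT] at hTy
    rw [Nonneg.mk_smul, sub_div, sub_smul]
    linear_combination (norm := module) -hTy
  obtain ⟨ψ, hψ, hψz⟩ := ih _ (Finset.card_image_le.trans_lt hcard) _ hTz rfl
  refine ⟨ψ ∘ₗ T, fun w hw => ?_, hψz⟩
  by_cases hwu : w = u
  · simp [hwu, hTu]
  · exact hψ (T w) (Finset.mem_image_of_mem T (Finset.mem_erase.mpr ⟨hwu, hw⟩))

theorem exists_dual_nonneg_eq_zero_pos_of_sub_notMem (s : Finset E) {p u : E}
    (hp : p ∈ hull ℝ (s : Set E)) (hu : ∀ ε > (0 : ℝ), p - ε • u ∉ hull ℝ (s : Set E)) :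
    ∃ φ : E →ₗ[ℝ] ℝ, (∀ w ∈ s, 0 ≤ φ w) ∧ φ p = 0 ∧ 0 < φ u := by
  classical
  have hnot : -u ∉ hull ℝ (insert (-p) s : Finset E) := by
    rw [Finset.coe_insert, Submodule.mem_span_insert]
    rintro ⟨⟨t, ht0⟩, c, hc, hcu⟩
    -- from `-u = t • (-p) + c`, the point `p - u / (1 + t)` is `(p + c) / (1 + t)`
    have ht : 0 < 1 + t := by linarith
    refine hu (1 + t)⁻¹ (inv_pos.mpr ht) ?_
    have hpc : p - (1 + t)⁻¹ • u = (1 + t)⁻¹ • (p + c) := by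
      rw [Nonneg.mk_smul] at hcu
      have : (1 + t) • p - u = p + c := by rw [add_smul, one_smul, ← neg_neg u, hcu]; module
      rw [← this, smul_sub, smul_smul, inv_mul_cancel₀ ht.ne', one_smul]
    rw [hpc]
    exact PointedCone.smul_mem _ (inv_pos.mpr ht).le (add_mem hp hc)
  obtain ⟨φ, hφ, hφu⟩ := exists_dual_nonneg_neg_of_notMem_hull _ hnot
  have hφp : 0 ≤ φ p := nonneg_of_mem_hull (fun w hw => hφ w (Finset.mem_insert_of_mem hw)) hp
  have hφnp : 0 ≤ φ (-p) := hφ _ (Finset.mem_insert_self _ _)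
  rw [map_neg] at hφnp hφu
  exact ⟨φ, fun w hw => hφ w (Finset.mem_insert_of_mem hw), by linarith, by linarith⟩

theorem exists_dual_exposing_face (s : Finset E) {p : E} (hp : p ∈ hull ℝ (s : Set E)) :
    ∃ φ : E →ₗ[ℝ] ℝ, (∀ w ∈ s, 0 ≤ φ w) ∧ φ p = 0 ∧
      ∀ u ∈ s, (∀ ε > (0 : ℝ), p - ε • u ∉ hull ℝ (s : Set E)) → 0 < φ u := by
  classical
  have h : ∀ u : E, ∃ φ : E →ₗ[ℝ] ℝ, (∀ w ∈ s, 0 ≤ φ w) ∧ φ p = 0 ∧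
      ((∀ ε > (0 : ℝ), p - ε • u ∉ hull ℝ (s : Set E)) → 0 < φ u) := fun u => by
    by_cases hu : ∀ ε > (0 : ℝ), p - ε • u ∉ hull ℝ (s : Set E)
    · obtain ⟨φ, hφ⟩ := exists_dual_nonneg_eq_zero_pos_of_sub_notMem s hp hu
      exact ⟨φ, hφ.1, hφ.2.1, fun _ => hφ.2.2⟩
    · exact ⟨0, by simp, by simp, fun h => absurd h hu⟩
  choose φ hφs hφp hφu using h
  refine ⟨∑ u ∈ s, φ u, fun w hw => ?_, by simp [hφp], fun u hu hsub => ?_⟩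
  · simpa only [LinearMap.sum_apply] using Finset.sum_nonneg fun u _ => hφs u w hw
  · simpa only [LinearMap.sum_apply] using
      Finset.sum_pos' (fun w _ => hφs w u hu) ⟨u, hu, hφu u hsub⟩

theorem eq_zero_of_mem_hull_of_apply_eq_zero {s : Finset E} {φ : E →ₗ[ℝ] ℝ}
    (hφ : ∀ u ∈ s, u ≠ 0 → 0 < φ u) {x : E} (hx : x ∈ hull ℝ (s : Set E))
    (hφx : φ x = 0) : x = 0 := by
  obtain ⟨f, -, rfl⟩ := Submodule.mem_span_finset.mp hx
  have hterm : ∀ u ∈ s, 0 ≤ (f u : ℝ) * φ u := fun u hu => by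
    rcases eq_or_ne u 0 with rfl | hu0
    · simp
    · exact mul_nonneg (f u).2 (hφ u hu hu0).le
  simp only [map_sum, ← Nonneg.coe_smul, map_smul, smul_eq_mul] at hφx
  refine Finset.sum_eq_zero fun u hu => ?_
  rcases eq_or_ne u 0 with rfl | hu0
  · exact smul_zero _
  · have := (Finset.sum_eq_zero_iff_of_nonneg hterm).mp hφx u hu
    rw [← Nonneg.coe_smul, (mul_eq_zero.mp this).resolve_right (hφ u hu hu0).ne', zero_smul]

theorem mem_hull_range_iff {ι : Type*} [Fintype ι] {v : ι → E} {x : E} :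
    x ∈ hull ℝ (Set.range v) ↔
      ∃ c : ι → ℝ, (∀ i, 0 ≤ c i) ∧ x = ∑ i, c i • v i := by
  rw [Submodule.mem_span_range_iff_exists_fun]
  constructor
  · rintro ⟨c, rfl⟩
    exact ⟨fun i => c i, fun i => (c i).2, by simp only [Nonneg.coe_smul]⟩
  · rintro ⟨c, hc, rfl⟩
    exact ⟨fun i => ⟨c i, hc i⟩, by simp only [Nonneg.mk_smul]⟩

theorem isClosed_setOf_apply_eq {V : Type*} [AddCommGroup V] [Module ℝ V] [TopologicalSpace V]
    [IsTopologicalAddGroup V] [ContinuousSMul ℝ V] [T2Space V] [FiniteDimensional ℝ V]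
    (L : V →ₗ[ℝ] E) (b : E) : IsClosed {x | L x = b} := by
  -- `E` carries no topology, so test the equation against every linear functional
  have h : {x | L x = b} = ⋂ φ : Module.Dual ℝ E, {x | (φ ∘ₗ L) x = φ b} := by
    ext x
    simp only [Set.mem_ofPred_eq, Set.mem_iInter, LinearMap.comp_apply]
    refine ⟨fun h φ => by rw [h], fun h => sub_eq_zero.mp ?_⟩
    exact (Module.forall_dual_apply_eq_zero_iff ℝ _).mp fun φ => by rw [map_sub, h φ, sub_self]
  rw [h]
  exact isClosed_iInter fun φ =>
    isClosed_eq (φ ∘ₗ L).continuous_of_finiteDimensional continuous_const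

def coneSlice (C : PointedCone ℝ E) (τ : E →ₗ[ℝ] ℝ) (b : E) (t : ℝ) : Set E :=
  {x | x ∈ C ∧ b - x ∈ C ∧ τ x = t}

theorem coneSlice_nonempty (C : PointedCone ℝ E) (τ : E →ₗ[ℝ] ℝ) {b : E} (hb : b ∈ C)
    {t : ℝ} (ht : 0 ≤ t) (htb : t ≤ τ b) : (coneSlice C τ b t).Nonempty := by
  have hθ : 0 ≤ t / τ b := div_nonneg ht (ht.trans htb)
  refine ⟨(t / τ b) • b, C.smul_mem hθ hb, ?_, ?_⟩
  · nth_rw 1 [← one_smul ℝ b]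
    rw [← sub_smul]
    exact C.smul_mem (sub_nonneg.mpr (div_le_one_of_le₀ htb (ht.trans htb))) hb
  · rcases (ht.trans htb).eq_or_lt with h | h
    · simp [← h, le_antisymm (h ▸ htb) ht]
    · rw [map_smul, smul_eq_mul, div_mul_cancel₀ _ h.ne']

theorem exists_isMinOn_coneSlice {ι : Type*} [Fintype ι] (v : ι → E) {σ : E →ₗ[ℝ] ℝ}
    (hσ : ∀ i, 0 < σ (v i)) (τ : E →ₗ[ℝ] ℝ) (b : E) (t : ℝ)
    (hne : (coneSlice (hull ℝ (Set.range v)) τ b t).Nonempty) :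
    ∃ x ∈ coneSlice (hull ℝ (Set.range v)) τ b t,
      IsMinOn σ (coneSlice (hull ℝ (Set.range v)) τ b t) x := by
  set lc := Fintype.linearCombination ℝ v
  have hC : ∀ x, x ∈ hull ℝ (Set.range v) ↔ ∃ c, 0 ≤ c ∧ lc c = x := fun x => by
    simp only [mem_hull_range_iff, Pi.le_def, Pi.zero_apply, lc,
      Fintype.linearCombination_apply, eq_comm]
  have hσlc : ∀ c, σ (lc c) = ∑ i, c i * σ (v i) := fun c => by
    simp [lc, Fintype.linearCombination_apply, map_sum]
  -- coefficients `(c, c')` of a point `x = lc c` of the slice and of `b - x = lc c'`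
  set Y := {q : (ι → ℝ) × (ι → ℝ) | 0 ≤ q ∧ lc q.1 + lc q.2 = b ∧ τ (lc q.1) = t}
  have hKY : coneSlice (hull ℝ (Set.range v)) τ b t = (fun q => lc q.1) '' Y := by
    ext x
    simp only [coneSlice, hC, Set.mem_ofPred_eq, Set.mem_image, Y, Prod.le_def, Prod.fst_zero,
      Prod.snd_zero, Prod.exists]
    constructor
    · rintro ⟨⟨c, hc, rfl⟩, ⟨c', hc', hbc'⟩, rfl⟩
      exact ⟨c, c', ⟨⟨hc, hc'⟩, by rw [hbc', add_sub_cancel], rfl⟩, rfl⟩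
    · rintro ⟨c, c', ⟨⟨hc, hc'⟩, hb, rfl⟩, rfl⟩
      exact ⟨⟨c, hc, rfl⟩, ⟨c', hc', by rw [← hb, add_sub_cancel_left]⟩, rfl⟩
  have hYbdd : Y ⊆ Set.Icc 0 (fun i => σ b / σ (v i), fun i => σ b / σ (v i)) := by
    rintro q ⟨hq, hb, -⟩
    have hσb : σ b = ∑ i, (q.1 i + q.2 i) * σ (v i) := by
      simp only [← hb, map_add, hσlc, add_mul, Finset.sum_add_distrib]
    have hle : ∀ i, (q.1 i + q.2 i) * σ (v i) ≤ σ b := fun i => hσb ▸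
      Finset.single_le_sum (f := fun i => (q.1 i + q.2 i) * σ (v i))
        (fun j _ => mul_nonneg (add_nonneg (hq.1 j) (hq.2 j)) (hσ j).le) (Finset.mem_univ i)
    refine ⟨hq, fun i => ?_, fun i => ?_⟩ <;> rw [le_div_iff₀ (hσ i)] <;>
      refine le_trans (mul_le_mul_of_nonneg_right ?_ (hσ i).le) (hle i)
    exacts [le_add_of_nonneg_right (hq.2 i), le_add_of_nonneg_left (hq.1 i)]
  have hYclosed : IsClosed Y :=
    isClosed_Ici.inter ((isClosed_setOf_apply_eq (lc.coprod lc) b).inter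
      (isClosed_setOf_apply_eq (τ ∘ₗ lc ∘ₗ LinearMap.fst ℝ (ι → ℝ) (ι → ℝ)) t))
  have hY : IsCompact Y := isCompact_Icc.of_isClosed_subset hYclosed hYbdd
  rw [hKY] at hne ⊢
  obtain ⟨q, hqY, hqmin⟩ := hY.exists_isMinOn hne.of_image
    (σ ∘ₗ lc ∘ₗ LinearMap.fst ℝ _ _).continuous_of_finiteDimensional.continuousOn
  exact ⟨lc q.1, Set.mem_image_of_mem _ hqY, Set.forall_mem_image.mpr fun q' hq' => hqmin hq'⟩

theorem exists_mem_coneSlice_exposed (s : Finset E)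
    (hs : ∀ u ∈ s, u ≠ 0 → -u ∉ hull ℝ (s : Set E)) (τ : E →ₗ[ℝ] ℝ) {b : E}
    (hb : b ∈ hull ℝ (s : Set E)) {t : ℝ} (ht : 0 ≤ t) (htb : t ≤ τ b) :
    ∃ b'' ∈ coneSlice (hull ℝ (s : Set E)) τ b t, ∃ lam : E →ₗ[ℝ] ℝ,
      (∀ u ∈ s, 0 ≤ lam u) ∧ lam b'' = 0 ∧ ∀ u ∈ s, u ≠ 0 → τ u = 0 → 0 < lam u := by
  classical
  set C := hull ℝ (s : Set E)
  obtain ⟨σ, -, -, hσ⟩ := exists_dual_exposing_face s C.zero_mem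
  have hσpos : ∀ u ∈ s, u ≠ 0 → 0 < σ u := fun u hu hu0 => hσ u hu fun ε hε hεu => hs u hu hu0 <| by
    simpa [smul_smul, inv_mul_cancel₀ hε.ne'] using C.smul_mem (inv_pos.mpr hε).le hεu
  have hC : hull ℝ (Set.range ((↑) : s.filter (· ≠ 0) → E)) = C := by
    rw [Subtype.range_coe_subtype]
    convert Submodule.span_sdiff_singleton_zero using 2
    ext; simp
  obtain ⟨b'', hb'', hmin⟩ := exists_isMinOn_coneSlice ((↑) : s.filter (· ≠ 0) → E) (σ := σ)
    (fun u => hσpos u (Finset.mem_filter.mp u.2).1 (Finset.mem_filter.mp u.2).2) τ b t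
    (hC ▸ coneSlice_nonempty C τ hb ht htb)
  rw [hC] at hb'' hmin
  obtain ⟨lam, hlam, hlamb, hlampos⟩ := exists_dual_exposing_face s hb''.1
  refine ⟨b'', hb'', lam, hlam, hlamb, fun u hu hu0 hτu => hlampos u hu fun ε hε hεu => ?_⟩
  have hmem : b'' - ε • u ∈ coneSlice C τ b t := by
    refine ⟨hεu, ?_, by simp [hτu, hb''.2.2]⟩
    rw [sub_sub_eq_add_sub, add_sub_right_comm]
    exact add_mem hb''.2.1 (C.smul_mem hε.le (subset_hull hu))
  have hle : σ b'' ≤ σ (b'' - ε • u) := hmin hmem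
  rw [map_sub, map_smul, smul_eq_mul] at hle
  nlinarith [hσpos u hu hu0]

theorem exists_mem_coneSlice_face_inf_ker_eq_zero (s : Finset E)
    (hs : ∀ u ∈ s, u ≠ 0 → -u ∉ hull ℝ (s : Set E)) {τ : E →ₗ[ℝ] ℝ}
    (hτ : ∀ u ∈ s, 0 ≤ τ u) {b : E} (hb : b ∈ hull ℝ (s : Set E)) {t : ℝ}
    (ht : 0 ≤ t) (htb : t ≤ τ b) :
    ∃ b'' ∈ coneSlice (hull ℝ (s : Set E)) τ b t, ∃ lam : E →ₗ[ℝ] ℝ,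
      (∀ x ∈ hull ℝ (s : Set E), 0 ≤ lam x) ∧ lam b'' = 0 ∧
      ∀ x ∈ hull ℝ (s : Set E), lam x = 0 → τ x = 0 → x = 0 := by
  obtain ⟨b'', hb'', lam, hlam, hlamb, hlampos⟩ := exists_mem_coneSlice_exposed s hs τ hb ht htb
  refine ⟨b'', hb'', lam, fun x hx => nonneg_of_mem_hull hlam hx, hlamb, fun x hx hlamx hτx => ?_⟩
  refine eq_zero_of_mem_hull_of_apply_eq_zero (φ := lam + τ) (fun u hu hu0 => ?_) hx
    (by simp [hlamx, hτx])
  rcases (hτ u hu).eq_or_lt with h | h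
  · simpa [← h] using hlampos u hu hu0 h.symm
  · simpa using add_pos_of_nonneg_of_pos (hlam u hu) h

end

/-- Let `C ⊆ ℝ^d` be a pointed cone generated by finitely many vectors,
`τ` a linear functional nonnegative on `C`, `F = C ∩ ker τ`, and `s ≥ 0`.  Then every
`b ∈ C` with `τ(b) ≥ s` lies in `b'' + C` for some `b'' ∈ C` with `τ(b'') = s` belonging
to an exposed face `D` of `C` with `D ∩ F = {0}`. -/
theorem stmt5 {d m : ℕ} (v : Fin m → (Fin d → ℝ))
    (C : Set (Fin d → ℝ))
    (hC : C = {y | ∃ c : Fin m → ℝ, (∀ i, 0 ≤ c i) ∧ y = ∑ i, c i • v i})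
    (hpointed : C ∩ (-C) = {0})
    (τ : (Fin d → ℝ) →ₗ[ℝ] ℝ) (hτ : ∀ x ∈ C, 0 ≤ τ x)
    (F : Set (Fin d → ℝ)) (hF : F = {x | x ∈ C ∧ τ x = 0})
    (s : ℝ) (hs : 0 ≤ s)
    (b : Fin d → ℝ) (hb : b ∈ C) (hsb : s ≤ τ b) :
    ∃ b'' ∈ C, τ b'' = s ∧
      (∃ lam : (Fin d → ℝ) →ₗ[ℝ] ℝ, (∀ x ∈ C, 0 ≤ lam x) ∧
        b'' ∈ {x | x ∈ C ∧ lam x = 0} ∧ {x | x ∈ C ∧ lam x = 0} ∩ F = {0}) ∧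
      b ∈ b'' +ᵥ C := by
  classical
  set S := Finset.univ.image v
  have hCS : C = PointedCone.hull ℝ (S : Set (Fin d → ℝ)) := by
    rw [hC, Finset.coe_image, Finset.coe_univ, Set.image_univ]
    ext x
    exact mem_hull_range_iff.symm
  subst hF
  rw [hCS] at hpointed hτ hb ⊢
  have hsalient : ∀ u ∈ S, u ≠ 0 → -u ∉ PointedCone.hull ℝ (S : Set (Fin d → ℝ)) := by
    intro u hu hu0 hneg
    have h : u ∈ (PointedCone.hull ℝ (S : Set (Fin d → ℝ)) : Set _) ∩
        -(PointedCone.hull ℝ (S : Set (Fin d → ℝ)) : Set _) :=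
      ⟨PointedCone.subset_hull hu, Set.mem_neg.mpr hneg⟩
    rw [hpointed] at h
    exact hu0 h
  obtain ⟨b'', ⟨hb''C, hbb'', hτb''⟩, lam, hlam, hlamb, hface⟩ :=
    exists_mem_coneSlice_face_inf_ker_eq_zero S hsalient
      (fun u hu => hτ u (PointedCone.subset_hull hu)) hb hs hsb
  refine ⟨b'', hb''C, hτb'', ⟨lam, hlam, ⟨hb''C, hlamb⟩, ?_⟩, ⟨b - b'', hbb'', by simp⟩⟩
  refine Set.eq_singleton_iff_unique_mem.mpr ⟨by simp, ?_⟩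
  rintro x ⟨⟨hx, hlamx⟩, -, hτx⟩
  exact hface x hx hlamx hτx
end

section
/- Let ρ_1,…,ρ_m ∈ ℝ^d, let C = {Σ_i c_i ρ_i : c_i ≥ 0} be the cone they generate and G = {Σ_i t_i ρ_i : 0 ≤ t_i ≤ 1} the zonotope they generate, and let α ∈ ℝ^d. If β ∈ α + C and β − ρ_i ∉ α + C for every i = 1,…,m, then β ∈ α + G. -/
open Pointwise

/-- descent step of the zonotope lemma.  If `C` is the cone and `G` the
zonotope generated by `ρ_1, …, ρ_m ∈ ℝ^d`, `β ∈ α + C`, and `β − ρ_i ∉ α + C` for every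
`i`, then `β ∈ α + G`. -/
theorem stmt6 {d m : ℕ} (ρ : Fin m → (Fin d → ℝ))
    (C : Set (Fin d → ℝ))
    (hC : C = {y | ∃ c : Fin m → ℝ, (∀ i, 0 ≤ c i) ∧ y = ∑ i, c i • ρ i})
    (G : Set (Fin d → ℝ))
    (hG : G = {y | ∃ t : Fin m → ℝ, (∀ i, 0 ≤ t i ∧ t i ≤ 1) ∧ y = ∑ i, t i • ρ i})
    (α β : Fin d → ℝ) (hβ : β ∈ α +ᵥ C)
    (h : ∀ i, β - ρ i ∉ α +ᵥ C) :
    β ∈ α +ᵥ G := by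
  obtain ⟨x, hx, rfl⟩ := hβ
  rw [hC] at hx
  obtain ⟨c, hc0, rfl⟩ := hx
  have hle : ∀ i, c i ≤ 1 := by
    intro i
    by_contra hgt
    push_neg at hgt
    apply h i
    refine ⟨∑ j, (Function.update c i (c i - 1)) j • ρ j, ?_, ?_⟩
    · rw [hC]
      exact ⟨_, fun j => by
        rcases eq_or_ne j i with rfl | hj
        · simp [Function.update_self]; linarith
        · simpa [Function.update_of_ne hj] using hc0 j, rfl⟩
    · have hsum : ∑ j, (Function.update c i (c i - 1)) j • ρ j
          = (∑ j, c j • ρ j) - ρ i := by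
        rw [Finset.sum_congr rfl (fun j _ =>
          Function.apply_update (fun k x => x • ρ k) c i (c i - 1) j),
          Finset.sum_update_of_mem (Finset.mem_univ i)]
        rw [show (∑ j, c j • ρ j) = c i • ρ i + ∑ j ∈ Finset.univ \ {i}, c j • ρ j by
          rw [← Finset.sum_update_of_mem (Finset.mem_univ i)]
          simp [Function.update_eq_self]]
        rw [sub_smul, one_smul]
        abel
      rw [hsum]
      simp [vadd_eq_add]
      abel
  exact ⟨∑ i, c i • ρ i, by rw [hG]; exact ⟨c, fun i => ⟨hc0 i, hle i⟩, rfl⟩, rfl⟩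
end

section
/- Let k be a field and Q ⊆ ℤ^d a sharp affine semigroup generating ℤ^d as a group, with semigroup algebra k[Q]. A proper monomial ideal W of k[Q] is irreducible (meaning: for all ideals I₁, I₂ of k[Q], W = I₁ ∩ I₂ implies W = I₁ or W = I₂) if and only if there exist a face F of Q and a degree α ∈ ℤ^d with (α + ℤF) ∩ Q ≠ ∅ such that W is the k-linear span of the monomials x^q with q ∈ Q and q ∉ α + F − Q, where ℤF denotes the subgroup of ℤ^d generated by F. -/
/-!
Write `T ⊆ Q` for the exponents of the standard monomials of `W` (those not in `W`); `T` is
closed under going down in `Q`, and `W` is irreducible exactly when `T` is not the union of two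
smaller such sets.

For irreducible `T`, the exponents `p ∈ Q` with `T + p ⊆ T` form a face `F`. Each generator `a`
of `Q` outside `F` gives the proper down-closed subset `{x ∈ T | x + a ∈ T}`, so irreducibility
forces every element of `T` below an element `α` that is maximal for a functional `λ` cutting out
`F`; grouping these maxima by their class modulo `ℤF` and using irreducibility once more shows
`T = Q ∩ (α + F - Q)`. That `F` is cut out by an integral functional is Farkas' lemma applied to
the generators of `Q`.

Conversely, for `W` of this shape, any `f ∉ W` can be moved by a monomial and truncated to a
nonzero element supported on `α + ℤF` lying in `W + (f)`. Two such elements have, up to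
monomial factors, a common multiple supported on `α + F`, which lies outside `W`; as `k[Q]` is a
domain this rules out `W = I₁ ∩ I₂` with both `Iᵢ ⊋ W`.
-/

open Pointwise

section Farkas

variable {𝕜 V : Type*} [Field 𝕜] [LinearOrder 𝕜] [IsStrictOrderedRing 𝕜]
  [AddCommGroup V] [Module 𝕜 V]

theorem exists_dual_neg_of_not_exists_nonneg_combination {ι : Type*} (t : Finset ι)
    (v : ι → V) (b : V)
    (hb : ¬∃ c : ι → 𝕜, (∀ i ∈ t, 0 ≤ c i) ∧ b = ∑ i ∈ t, c i • v i) :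
    ∃ μ : Module.Dual 𝕜 V, μ b < 0 ∧ ∀ i ∈ t, 0 ≤ μ (v i) := by
  classical
  induction t using Finset.induction_on generalizing v b with
  | empty =>
    have hb0 : b ≠ 0 := fun h => hb ⟨0, by simp, by simp [h]⟩
    obtain ⟨φ, hφ⟩ : ∃ φ : Module.Dual 𝕜 V, φ b ≠ 0 := by
      by_contra! h
      exact hb0 ((Module.forall_dual_apply_eq_zero_iff 𝕜 b).mp h)
    exact ⟨-(φ b)⁻¹ • φ, by simp [hφ], by simp⟩
  | insert a t ha ih =>
    have hupdate : ∀ (c : ι → 𝕜) (s : 𝕜), (0 ≤ s → (∀ i ∈ t, 0 ≤ c i) →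
        ∀ i ∈ insert a t, 0 ≤ Function.update c a s i) ∧
        ∑ i ∈ insert a t, Function.update c a s i • v i = s • v a + ∑ i ∈ t, c i • v i := by
      intro c s
      have hne : ∀ i ∈ t, i ≠ a := fun i hi => ne_of_mem_of_not_mem hi ha
      refine ⟨fun hs hc => Finset.forall_mem_insert _ _ _ |>.mpr ⟨by simpa, fun i hi => ?_⟩, ?_⟩
      · simpa [hne i hi] using hc i hi
      · rw [Finset.sum_insert ha, Function.update_self]
        congr 1
        exact Finset.sum_congr rfl fun i hi => by rw [Function.update_of_ne (hne i hi)]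
    obtain ⟨μ, hμb, hμt⟩ := ih v b fun ⟨c, hc, hcb⟩ =>
      hb ⟨_, (hupdate c 0).1 le_rfl hc, by rw [(hupdate c 0).2, hcb, zero_smul, zero_add]⟩
    by_cases hμa : 0 ≤ μ (v a)
    · exact ⟨μ, hμb, Finset.forall_mem_insert _ _ _ |>.mpr ⟨hμa, hμt⟩⟩
    push Not at hμa
    -- `P` projects along `v a` onto the kernel of `μ`
    set P : V →ₗ[𝕜] V := μ (v a) • LinearMap.id - μ.smulRight (v a) with hP
    obtain ⟨ν, hνb, hνt⟩ := ih (P ∘ v) (P b) fun ⟨c, hc, hcb⟩ => by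
      set y := ∑ i ∈ t, c i • v i
      have hPb : P b = P y := by simpa [y, map_sum] using hcb
      set s := (μ b - μ y) / μ (v a)
      have hs : 0 ≤ s := by
        have : 0 ≤ μ y := by
          simpa [y, map_sum] using Finset.sum_nonneg fun i hi => mul_nonneg (hc i hi) (hμt i hi)
        exact div_nonneg_of_nonpos (by linarith) hμa.le
      have hby : b = s • v a + y := by
        apply smul_right_injective V hμa.ne
        have : μ (v a) * s = μ b - μ y := mul_div_cancel₀ _ hμa.ne
        simp only [hP, LinearMap.sub_apply, LinearMap.smul_apply, LinearMap.id_apply,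
          LinearMap.smulRight_apply] at hPb
        simp only [smul_add, smul_smul, this]
        linear_combination (norm := module) hPb
      exact hb ⟨_, (hupdate c s).1 hs hc, by rw [(hupdate c s).2, hby]⟩
    refine ⟨ν ∘ₗ P, hνb, Finset.forall_mem_insert _ _ _ |>.mpr ⟨?_, hνt⟩⟩
    simp [hP]

theorem exists_dual_nonneg_and_pos {ι : Type*} [Fintype ι] (v : ι → V) (P : ι → Prop)
    (h : ∀ j, P j → ¬∃ c : ι → 𝕜, (∀ i, 0 ≤ c i) ∧ -v j = ∑ i, c i • v i) :
    ∃ μ : Module.Dual 𝕜 V, (∀ i, 0 ≤ μ (v i)) ∧ ∀ j, P j → 0 < μ (v j) := by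
  classical
  choose! μ hμj hμ using fun j hj =>
    exists_dual_neg_of_not_exists_nonneg_combination Finset.univ v (-v j) (by simpa using h j hj)
  have hsum : ∀ i,
      (∑ j ∈ Finset.univ.filter P, μ j) (v i) = ∑ j ∈ Finset.univ.filter P, μ j (v i) :=
    fun i => LinearMap.sum_apply ..
  refine ⟨∑ j ∈ Finset.univ.filter P, μ j, fun i => ?_, fun j hj => ?_⟩
  · rw [hsum]
    exact Finset.sum_nonneg fun j hj => hμ j (Finset.mem_filter.mp hj).2 i (Finset.mem_univ i)
  · rw [hsum]
    refine Finset.sum_pos' (fun i hi => hμ i (Finset.mem_filter.mp hi).2 j (Finset.mem_univ j))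
      ⟨j, Finset.mem_filter.mpr ⟨Finset.mem_univ j, hj⟩, ?_⟩
    simpa using hμj j hj

end Farkas

theorem exists_nat_mul_eq_intCast {ι : Type*} [Fintype ι] (c : ι → ℚ) :
    ∃ N : ℕ, 0 < N ∧ ∀ i, ∃ z : ℤ, (z : ℚ) = N * c i := by
  refine ⟨∏ i, (c i).den, Finset.prod_pos fun i _ => (c i).den_pos, fun i => ?_⟩
  obtain ⟨M, hM⟩ := Finset.dvd_prod_of_mem (fun i => (c i).den) (Finset.mem_univ i)
  refine ⟨M * (c i).num, ?_⟩
  rw [hM, Int.cast_mul, ← Rat.mul_den_eq_num]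
  push_cast
  ring

theorem exists_nsmul_eq_sum_nsmul_of_eq_sum_smul {ι κ : Type*} [Fintype ι] (w : ι → κ → ℤ)
    (b : κ → ℤ) (c : ι → ℚ) (hc : ∀ i, 0 ≤ c i)
    (h : (fun j => (b j : ℚ)) = ∑ i, c i • fun j => (w i j : ℚ)) :
    ∃ N : ℕ, 0 < N ∧ ∃ m : ι → ℕ, N • b = ∑ i, m i • w i := by
  obtain ⟨N, hN, hz⟩ := exists_nat_mul_eq_intCast c
  choose z hz using hz
  have hm : ∀ i, ((z i).toNat : ℚ) = N * c i := fun i => by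
    rw [← hz i, ← Int.cast_natCast, Int.toNat_of_nonneg]
    exact_mod_cast (hz i).symm ▸ mul_nonneg (Nat.cast_nonneg N) (hc i)
  refine ⟨N, hN, fun i => (z i).toNat, funext fun j => Int.cast_injective (α := ℚ) ?_⟩
  have hj := congrFun h j
  simp only [Finset.sum_apply, Pi.smul_apply, smul_eq_mul] at hj
  simp only [Pi.smul_apply, Finset.sum_apply]
  simp only [nsmul_eq_mul, Int.cast_mul, Int.cast_natCast, Int.cast_sum, hm, hj, Finset.mul_sum,
    mul_assoc]

theorem exists_intLinearMap_eq_nat_mul {ι : Type*} [Fintype ι] (μ : Module.Dual ℚ (ι → ℚ)) :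
    ∃ (N : ℕ) (lam : (ι → ℤ) →ₗ[ℤ] ℤ), 0 < N ∧
      ∀ x, (lam x : ℚ) = N * μ (fun i => (x i : ℚ)) := by
  classical
  obtain ⟨N, hN, hz⟩ := exists_nat_mul_eq_intCast fun i => μ (Pi.single i 1)
  choose z hz using hz
  refine ⟨N, ∑ i, z i • LinearMap.proj i, hN, fun x => ?_⟩
  rw [LinearMap.pi_apply_eq_sum_univ μ, Finset.mul_sum]
  push_cast [LinearMap.sum_apply]
  refine Finset.sum_congr rfl fun i _ => ?_
  have : (fun j => if i = j then (1 : ℚ) else 0) = Pi.single i 1 := by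
    ext j; simp [Pi.single_apply, eq_comm]
  simp [this, hz, mul_left_comm, mul_comm]

section Generators

variable {G : Type*} [AddCommGroup G] {s : Set G}

theorem nonneg_and_eq_setOf_of_generators (F : AddSubmonoid G)
    (hF : ∀ p ∈ AddSubmonoid.closure s, ∀ r ∈ AddSubmonoid.closure s, p + r ∈ F → p ∈ F)
    (hFQ : F ≤ AddSubmonoid.closure s) (lam : G →ₗ[ℤ] ℤ)
    (hzero : ∀ a ∈ s, a ∈ F → lam a = 0) (hpos : ∀ a ∈ s, a ∉ F → 0 < lam a) :
    (∀ q ∈ AddSubmonoid.closure s, 0 ≤ lam q) ∧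
      (F : Set G) = {q | q ∈ AddSubmonoid.closure s ∧ lam q = 0} := by
  have hnonneg : ∀ q ∈ AddSubmonoid.closure s, 0 ≤ lam q := by
    intro q hq
    induction hq using AddSubmonoid.closure_induction with
    | mem a ha => by_cases haF : a ∈ F <;> simp [hzero a ha, hpos a ha, haF, le_of_lt]
    | zero => simp
    | add x y _ _ hx hy => rw [map_add]; positivity
  have hzero' : ∀ q ∈ AddSubmonoid.closure s, q ∈ F → lam q = 0 := by
    intro q hq
    induction hq using AddSubmonoid.closure_induction with
    | mem a ha => exact hzero a ha
    | zero => simp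
    | add x y hxQ hyQ hx hy =>
      intro hxy
      rw [map_add, hx (hF x hxQ y hyQ hxy), hy (hF y hyQ x hxQ (add_comm x y ▸ hxy)), add_zero]
  have hmem : ∀ q ∈ AddSubmonoid.closure s, lam q = 0 → q ∈ F := by
    intro q hq
    induction hq using AddSubmonoid.closure_induction with
    | mem a ha => exact fun h0 => by_contra fun haF => (hpos a ha haF).ne' h0
    | zero => exact fun _ => F.zero_mem
    | add x y hxQ hyQ hx hy =>
      intro hxy
      rw [map_add] at hxy
      have := hnonneg x hxQ
      have := hnonneg y hyQ
      exact F.add_mem (hx (by omega)) (hy (by omega))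
  exact ⟨hnonneg, Set.ext fun q => ⟨fun hqF => ⟨hFQ hqF, hzero' q (hFQ hqF) hqF⟩,
    fun ⟨hq, hq0⟩ => hmem q hq hq0⟩⟩

end Generators

theorem AddSubmonoid.mem_of_nsmul_add_mem {G : Type*} [AddCommMonoid G] {Q F : AddSubmonoid G}
    (hF : ∀ p ∈ Q, ∀ r ∈ Q, p + r ∈ F → p ∈ F) {a x : G} (ha : a ∈ Q) (hx : x ∈ Q) {N : ℕ}
    (hN : 0 < N) (h : N • a + x ∈ F) : a ∈ F := by
  obtain ⟨n, rfl⟩ := Nat.exists_eq_add_one_of_ne_zero hN.ne'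
  exact hF a ha (n • a + x) (add_mem (nsmul_mem ha n) hx) (by rwa [← add_assoc, ← succ_nsmul'])

theorem isFaceOf_of_add_mem {d : ℕ} {Q : AddSubmonoid (Fin d → ℤ)} (hQ : Q.FG)
    (F : AddSubmonoid (Fin d → ℤ)) (hFQ : F ≤ Q)
    (hF : ∀ p ∈ Q, ∀ r ∈ Q, p + r ∈ F → p ∈ F) : IsFaceOf (Q : Set (Fin d → ℤ)) F := by
  classical
  obtain ⟨s, rfl⟩ := hQ
  set sF := s.filter (· ∈ F)
  -- a functional nonnegative on these vectors vanishes on the generators lying in `F`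
  set w : {a // a ∈ s} ⊕ {a // a ∈ sF} → Fin d → ℤ := Sum.elim (fun a => a.1) fun f => -f.1
  set v : {a // a ∈ s} ⊕ {a // a ∈ sF} → Fin d → ℚ := fun j i => (w j i : ℚ)
  have hv : ∀ j, Sum.elim (fun a => a.1 ∉ F) (fun _ => False) j →
      ¬∃ c : _ → ℚ, (∀ i, 0 ≤ c i) ∧ -v j = ∑ i, c i • v i := by
    rintro (⟨a₀, ha₀⟩ | f) h₀ ⟨c, hc, hsum⟩
    swap; · exact h₀
    obtain ⟨N, hN, m, hm⟩ := exists_nsmul_eq_sum_nsmul_of_eq_sum_smul w (-a₀) c hc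
      (by rw [← hsum]; ext; simp [v, w])
    simp only [Fintype.sum_sum_type, w, Sum.elim_inl, Sum.elim_inr, smul_neg,
      Finset.sum_neg_distrib] at hm
    have hrel : N • a₀ + ∑ a, m (.inl a) • (a : Fin d → ℤ) = ∑ f, m (.inr f) • (f : Fin d → ℤ) := by
      linear_combination (norm := module) -hm
    have hX : ∑ a, m (.inl a) • (a : Fin d → ℤ) ∈ AddSubmonoid.closure (s : Set (Fin d → ℤ)) :=
      AddSubmonoid.sum_mem _ fun a _ => nsmul_mem (AddSubmonoid.subset_closure a.2) _
    exact h₀ (AddSubmonoid.mem_of_nsmul_add_mem hF (AddSubmonoid.subset_closure ha₀) hX hN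
      (hrel ▸ F.sum_mem fun f _ => nsmul_mem (Finset.mem_filter.mp f.2).2 _))
  obtain ⟨μ, hμ, hμpos⟩ := exists_dual_nonneg_and_pos v _ hv
  obtain ⟨N, lam, hN, hlam⟩ := exists_intLinearMap_eq_nat_mul μ
  refine ⟨lam, nonneg_and_eq_setOf_of_generators F hF hFQ lam (fun a ha haF => ?_)
    fun a ha haF => ?_⟩
  · have h1 := hμ (.inl ⟨a, ha⟩)
    have h2 := hμ (.inr ⟨a, Finset.mem_filter.mpr ⟨ha, haF⟩⟩)
    simp only [v, w, Sum.elim_inl, Sum.elim_inr, Pi.neg_apply, Int.cast_neg] at h1 h2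
    rw [show (fun i => -(a i : ℚ)) = -fun i => (a i : ℚ) from rfl, map_neg] at h2
    have : (lam a : ℚ) = 0 := by rw [hlam]; simp [le_antisymm (neg_nonneg.mp h2) h1]
    exact_mod_cast this
  · have := hμpos (.inl ⟨a, ha⟩) haF
    have : (0 : ℚ) < lam a := by rw [hlam]; exact mul_pos (by exact_mod_cast hN) this
    exact_mod_cast this

theorem Set.mem_vadd_sub_iff {G : Type*} [AddCommGroup G] {A B : Set G} {α y : G} :
    y ∈ α +ᵥ (A - B) ↔ ∃ u ∈ A, ∃ w ∈ B, y + w = α + u := by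
  simp only [Set.mem_vadd_set, Set.mem_sub, vadd_eq_add]
  constructor
  · rintro ⟨_, ⟨u, hu, w, hw, rfl⟩, rfl⟩
    exact ⟨u, hu, w, hw, by abel⟩
  · rintro ⟨u, hu, w, hw, h⟩
    exact ⟨u - w, ⟨u, hu, w, hw, rfl⟩, by rw [← add_sub_assoc, ← h]; abel⟩

section DownClosed

variable {G : Type*} [AddCommGroup G] (Q : AddSubmonoid G)

/-- For `X ⊆ Q` this says that `Q \ X` is an ideal of the monoid `Q`. -/
def IsDownClosedIn (X : Set G) : Prop :=
  ∀ x ∈ Q, ∀ r ∈ Q, x + r ∈ X → x ∈ X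

def IsUnionIrreducibleIn (T : Set G) : Prop :=
  ∀ X Y : Set G, IsDownClosedIn Q X → IsDownClosedIn Q Y → T = X ∪ Y → T = X ∨ T = Y

def stabilizerIn (T : Set G) : AddSubmonoid G where
  carrier := {p | p ∈ Q ∧ ∀ x ∈ T, x + p ∈ T}
  zero_mem' := ⟨Q.zero_mem, by simp⟩
  add_mem' := fun ⟨hp, hpT⟩ ⟨hq, hqT⟩ =>
    ⟨Q.add_mem hp hq, fun x hx => add_assoc x _ _ ▸ hqT _ (hpT x hx)⟩

def maximalIn (lam : G →ₗ[ℤ] ℤ) (T : Set G) : Set G :=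
  {x | x ∈ T ∧ ∀ r ∈ Q, x + r ∈ T → lam r = 0}

variable {Q} {T X Y : Set G}

theorem IsDownClosedIn.union (hX : IsDownClosedIn Q X) (hY : IsDownClosedIn Q Y) :
    IsDownClosedIn Q (X ∪ Y) :=
  fun x hx r hr => Or.imp (hX x hx r hr) (hY x hx r hr)

theorem IsDownClosedIn.biUnion {ι : Type*} {t : Finset ι} {Z : ι → Set G}
    (h : ∀ i ∈ t, IsDownClosedIn Q (Z i)) : IsDownClosedIn Q (⋃ i ∈ t, Z i) := by
  intro x hx r hr hxr
  obtain ⟨i, hi, hxri⟩ := Set.mem_iUnion₂.mp hxr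
  exact Set.mem_biUnion hi (h i hi x hx r hr hxri)

variable (Q) in
theorem isDownClosedIn_vadd_sub (α : G) (A : Set G) : IsDownClosedIn Q (α +ᵥ (A - Q)) := by
  intro y _ r hr hyr
  obtain ⟨u, hu, w, hw, h⟩ := Set.mem_vadd_sub_iff.mp hyr
  exact Set.mem_vadd_sub_iff.mpr ⟨u, hu, r + w, Q.add_mem hr hw, by rw [← h]; abel⟩

theorem IsUnionIrreducibleIn.eq_or_exists_eq_of_eq_union_biUnion (hT : IsUnionIrreducibleIn Q T)
    {ι : Type*} (t : Finset ι) {Z : ι → Set G} (hX : IsDownClosedIn Q X)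
    (hZ : ∀ i ∈ t, IsDownClosedIn Q (Z i)) (h : T = X ∪ ⋃ i ∈ t, Z i) :
    T = X ∨ ∃ i ∈ t, T = Z i := by
  classical
  induction t using Finset.induction_on with
  | empty => simpa using h
  | insert a t _ ih =>
    simp only [Finset.set_biUnion_insert, Finset.forall_mem_insert] at h hZ
    rw [Set.union_left_comm, Set.union_comm] at h
    rcases hT _ _ (hX.union (IsDownClosedIn.biUnion hZ.2)) hZ.1 h with h' | h'
    · exact (ih hZ.2 h').imp_right fun ⟨i, hi, hTi⟩ => ⟨i, Finset.mem_insert_of_mem hi, hTi⟩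
    · exact Or.inr ⟨a, Finset.mem_insert_self a t, h'⟩

theorem stabilizerIn_le : stabilizerIn Q T ≤ Q := fun _ hp => hp.1

theorem mem_stabilizerIn_of_add_mem (hT : IsDownClosedIn Q T) (hTQ : T ⊆ Q) {p r : G}
    (hp : p ∈ Q) (hr : r ∈ Q) (h : p + r ∈ stabilizerIn Q T) : p ∈ stabilizerIn Q T :=
  ⟨hp, fun x hx => hT _ (Q.add_mem (hTQ hx) hp) r hr (add_assoc x p r ▸ h.2 x hx)⟩

section Maximal

variable (lam : G →ₗ[ℤ] ℤ) (hlam : ∀ q ∈ Q, 0 ≤ lam q)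
include hlam

theorem exists_mem_add_mem_of_closure_eq {s : Set G} (hs : AddSubmonoid.closure s = Q)
    (hT : IsDownClosedIn Q T) {r : G} (hr : r ∈ Q) :
    ∀ x ∈ Q, x + r ∈ T → 0 < lam r → ∃ a ∈ s, 0 < lam a ∧ x + a ∈ T := by
  subst hs
  induction hr using AddSubmonoid.closure_induction with
  | mem a ha => exact fun x _ hxa hpos => ⟨a, ha, hpos, hxa⟩
  | zero => simp
  | add p q hp hq ihp ihq =>
    intro x hx hxpq hpos
    have hxp : x + p ∈ T := hT _ (add_mem hx hp) q hq (by rwa [add_assoc])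
    rcases (hlam p hp).lt_or_eq with hp0 | hp0
    · exact ihp x hx hxp hp0
    obtain ⟨a, ha, hapos, hxpa⟩ := ihq (x + p) (add_mem hx hp) (by rwa [add_assoc])
      (by rwa [map_add, ← hp0, zero_add] at hpos)
    refine ⟨a, ha, hapos, hT _ (add_mem hx (AddSubmonoid.subset_closure ha)) p hp ?_⟩
    rwa [add_right_comm]

theorem eq_setOf_add_mem_maximalIn {s : Finset G} (hs : AddSubmonoid.closure (s : Set G) = Q)
    (hTQ : T ⊆ Q) (hT : IsDownClosedIn Q T) (hirr : IsUnionIrreducibleIn Q T)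
    (hstab : ∀ a ∈ stabilizerIn Q T, lam a = 0) :
    T = {y | y ∈ Q ∧ ∃ r ∈ Q, y + r ∈ maximalIn Q lam T} := by
  classical
  have hsQ : ∀ a ∈ s, a ∈ Q := fun a ha => hs ▸ AddSubmonoid.subset_closure ha
  set D := {y | y ∈ Q ∧ ∃ r ∈ Q, y + r ∈ maximalIn Q lam T}
  set C : G → Set G := fun a => {x | x ∈ T ∧ x + a ∈ T}
  set t := s.filter (0 < lam ·)
  have hD : IsDownClosedIn Q D := fun y hy r' hr' ⟨_, r, hr, hmax⟩ =>
    ⟨hy, r' + r, add_mem hr' hr, by rwa [← add_assoc]⟩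
  have hC : ∀ a ∈ t, IsDownClosedIn Q (C a) := fun a ha x hx r hr ⟨h1, h2⟩ =>
    ⟨hT x hx r hr h1,
      hT _ (add_mem hx (hsQ a (Finset.mem_filter.mp ha).1)) r hr (by rwa [add_right_comm])⟩
  have hcover : T = D ∪ ⋃ a ∈ t, C a := by
    refine Set.Subset.antisymm (fun x hx => ?_) (Set.union_subset
      (fun y ⟨hy, r, hr, hmax⟩ => hT y hy r hr hmax.1) (Set.iUnion₂_subset fun a _ x hx => hx.1))
    by_cases h : ∃ r ∈ Q, x + r ∈ T ∧ 0 < lam r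
    · obtain ⟨r, hr, hxr, hpos⟩ := h
      obtain ⟨a, ha, hapos, hxa⟩ :=
        exists_mem_add_mem_of_closure_eq lam hlam hs hT hr x (hTQ hx) hxr hpos
      exact Or.inr (Set.mem_biUnion (Finset.mem_filter.mpr ⟨ha, hapos⟩) ⟨hx, hxa⟩)
    · push Not at h
      refine Or.inl ⟨hTQ hx, 0, Q.zero_mem, ?_⟩
      rw [add_zero]
      exact ⟨hx, fun r hr hxr => le_antisymm (h r hr hxr) (hlam r hr)⟩
  rcases hirr.eq_or_exists_eq_of_eq_union_biUnion t hD hC hcover with h | ⟨a, ha, hTa⟩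
  · exact h
  · obtain ⟨has, hapos⟩ := Finset.mem_filter.mp ha
    have haT : a ∈ stabilizerIn Q T := ⟨hsQ a has, fun x hx => (hTa ▸ hx : x ∈ C a).2⟩
    exact absurd (hstab a haT) hapos.ne'

end Maximal

theorem eq_inter_vadd_sub_of_mem_maximalIn {lam : G →ₗ[ℤ] ℤ} (hT : IsDownClosedIn Q T)
    (hirr : IsUnionIrreducibleIn Q T) (hdown : T = {y | y ∈ Q ∧ ∃ r ∈ Q, y + r ∈ maximalIn Q lam T})
    (hstab : ∀ p ∈ Q, lam p = 0 → p ∈ stabilizerIn Q T) {α : G} (hα : α ∈ maximalIn Q lam T) :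
    T = (Q : Set G) ∩ (α +ᵥ ((stabilizerIn Q T : Set G) - Q)) := by
  set F : Set G := (stabilizerIn Q T : Set G)
  set S := (Q : Set G) ∩ (α +ᵥ (F - Q))
  set B := {y | y ∈ Q ∧ ∃ β ∈ maximalIn Q lam T, β ∉ α +ᵥ (F - F) ∧ ∃ r ∈ Q, y + r = β}
  have hS : IsDownClosedIn Q S := fun y hy r hr hyr =>
    ⟨hy, isDownClosedIn_vadd_sub Q α F y hy r hr hyr.2⟩
  have hB : IsDownClosedIn Q B := by
    rintro y hy r' hr' ⟨-, β, hβ, hβα, r, hr, h⟩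
    exact ⟨hy, β, hβ, hβα, r' + r, add_mem hr' hr, by rw [← add_assoc, h]⟩
  have hcover : T = S ∪ B := by
    apply Set.Subset.antisymm
    · intro y hy
      rw [hdown] at hy
      obtain ⟨hyQ, r, hr, hβ⟩ := hy
      by_cases hβα : y + r ∈ α +ᵥ (F - F)
      · obtain ⟨u, hu, w, hw, h⟩ := Set.mem_vadd_sub_iff.mp hβα
        exact Or.inl ⟨hyQ, Set.mem_vadd_sub_iff.mpr
          ⟨u, hu, r + w, add_mem hr (stabilizerIn_le hw), by rw [← add_assoc, h]⟩⟩
      · exact Or.inr ⟨hyQ, y + r, hβ, hβα, r, hr, rfl⟩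
    · rintro y (⟨hyQ, hy⟩ | ⟨hyQ, β, hβ, -, r, hr, h⟩)
      · obtain ⟨u, hu, w, hw, h⟩ := Set.mem_vadd_sub_iff.mp hy
        exact hT y hyQ w hw (h ▸ hu.2 α hα.1)
      · exact hT y hyQ r hr (h ▸ hβ.1)
  refine (hirr S B hS hB hcover).resolve_right fun hTB => ?_
  obtain ⟨-, β, hβ, hβα, r, hr, h⟩ : α ∈ B := hTB ▸ hα.1
  have hrF : r ∈ F := hstab r hr (hα.2 r hr (h ▸ hβ.1))
  exact hβα (Set.mem_vadd_sub_iff.mpr ⟨r, hrF, 0, (stabilizerIn Q T).zero_mem, by rw [add_zero, h]⟩)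

end DownClosed

theorem exists_isFaceOf_eq_of_isUnionIrreducibleIn {d : ℕ} {Q : AddSubmonoid (Fin d → ℤ)}
    (hQ : Q.FG) {T : Set (Fin d → ℤ)} (hTQ : T ⊆ Q) (hT : IsDownClosedIn Q T)
    (hirr : IsUnionIrreducibleIn Q T) (hne : T.Nonempty) :
    ∃ (F : Set (Fin d → ℤ)) (α : Fin d → ℤ),
      IsFaceOf (Q : Set (Fin d → ℤ)) F ∧ α ∈ T ∧ T = (Q : Set (Fin d → ℤ)) ∩ (α +ᵥ (F - Q)) := by
  obtain ⟨lam, hlam, hF⟩ := isFaceOf_of_add_mem hQ (stabilizerIn Q T) stabilizerIn_le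
    fun p hp r hr => mem_stabilizerIn_of_add_mem hT hTQ hp hr
  have hstab : ∀ p, p ∈ stabilizerIn Q T ↔ p ∈ Q ∧ lam p = 0 := fun p => Set.ext_iff.mp hF p
  obtain ⟨s, hs⟩ := hQ
  have hdown := eq_setOf_add_mem_maximalIn lam hlam hs hTQ hT hirr fun a ha => ((hstab a).mp ha).2
  obtain ⟨y, hy⟩ := hne
  rw [hdown] at hy
  obtain ⟨-, r, -, hα⟩ := hy
  exact ⟨_, _, ⟨lam, hlam, hF⟩, hα.1, eq_inter_vadd_sub_of_mem_maximalIn hT hirr hdown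
    (fun p hp h0 => (hstab p).mpr ⟨hp, h0⟩) hα⟩

section MonomialIdeal

open AddMonoidAlgebra

variable (k : Type*) {G : Type*} [AddCommGroup G] (Q : AddSubmonoid G)

noncomputable def monomialIdealOutside [CommSemiring k] (X : Set G) :
    Ideal (AddMonoidAlgebra k Q) :=
  Ideal.span (of' k Q '' {q | (q : G) ∉ X})

variable {k Q} {T X Y : Set G}

section CommSemiring

variable [CommSemiring k]

theorem mem_monomialIdealOutside (hX : IsDownClosedIn Q X) {f : AddMonoidAlgebra k Q} :
    f ∈ monomialIdealOutside k Q X ↔ ∀ q ∈ f.coeff.support, (q : G) ∉ X := by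
  rw [monomialIdealOutside, mem_ideal_span_of'_image]
  refine forall₂_congr fun q _ => ⟨fun ⟨m, hm, d, hq⟩ hqX => hm (hX m m.2 d d.2 ?_),
    fun h => ⟨q, h, 0, (zero_add q).symm⟩⟩
  rwa [add_comm, ← AddSubmonoid.coe_add, ← hq]

theorem coe_monomialIdealOutside (hX : IsDownClosedIn Q X) :
    (monomialIdealOutside k Q X : Set (AddMonoidAlgebra k Q)) =
      {f : AddMonoidAlgebra k Q | ∀ q ∈ f.coeff.support, (q : G) ∉ X} :=
  Set.ext fun _ => mem_monomialIdealOutside hX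

theorem monomialIdealOutside_inter_self :
    monomialIdealOutside k Q ((Q : Set G) ∩ X) = monomialIdealOutside k Q X := by
  simp [monomialIdealOutside]

theorem monomialIdealOutside_union (hX : IsDownClosedIn Q X) (hY : IsDownClosedIn Q Y) :
    monomialIdealOutside k Q (X ∪ Y) = monomialIdealOutside k Q X ⊓ monomialIdealOutside k Q Y := by
  ext f
  simp only [Submodule.mem_inf, mem_monomialIdealOutside hX, mem_monomialIdealOutside hY,
    mem_monomialIdealOutside (hX.union hY), Set.mem_union, not_or]
  exact ⟨fun h => ⟨fun q hq => (h q hq).1, fun q hq => (h q hq).2⟩,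
    fun h q hq => ⟨h.1 q hq, h.2 q hq⟩⟩

theorem subset_of_monomialIdealOutside_le [Nontrivial k] (hY : IsDownClosedIn Q Y)
    (hYQ : Y ⊆ Q) (h : monomialIdealOutside k Q X ≤ monomialIdealOutside k Q Y) : Y ⊆ X := by
  intro y hy
  by_contra hyX
  have hmem : of' k Q ⟨y, hYQ hy⟩ ∈ monomialIdealOutside k Q X := Ideal.subset_span ⟨_, hyX, rfl⟩
  exact (mem_monomialIdealOutside hY).mp (h hmem) ⟨y, hYQ hy⟩ (by simp [of']) hy

theorem isUnionIrreducibleIn_of_eq_inf [Nontrivial k] (hTQ : T ⊆ Q) (hT : IsDownClosedIn Q T)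
    (hirr : ∀ I₁ I₂ : Ideal (AddMonoidAlgebra k Q), monomialIdealOutside k Q T = I₁ ⊓ I₂ →
      monomialIdealOutside k Q T = I₁ ∨ monomialIdealOutside k Q T = I₂) :
    IsUnionIrreducibleIn Q T := by
  intro X Y hX hY hXY
  have key := hirr _ _ (hXY ▸ monomialIdealOutside_union hX hY)
  refine key.imp (fun h => ?_) fun h => ?_
  · exact (subset_of_monomialIdealOutside_le hT hTQ h.ge).antisymm (hXY ▸ Set.subset_union_left)
  · exact (subset_of_monomialIdealOutside_le hT hTQ h.ge).antisymm (hXY ▸ Set.subset_union_right)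

theorem coe_span_single_eq (P : Q → Prop) :
    ((Submodule.span k {f | ∃ q, P q ∧ f = single q (1 : k)} : Submodule k (AddMonoidAlgebra k Q)) :
      Set (AddMonoidAlgebra k Q)) = {f | ∀ q ∈ f.coeff.support, P q} := by
  have : {f | ∃ q, P q ∧ f = single q (1 : k)} = (single · 1) '' {q | P q} := by
    ext f; simp [eq_comm]
  rw [this, ← supported_eq_span_single]
  rfl

theorem exists_eq_monomialIdealOutside (W : Ideal (AddMonoidAlgebra k Q))
    (hW : (W : Set (AddMonoidAlgebra k Q)) =
      (Submodule.span k {f | f ∈ W ∧ ∃ q : Q, f = single q (1 : k)} :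
        Submodule k (AddMonoidAlgebra k Q))) :
    ∃ T : Set G, T ⊆ Q ∧ IsDownClosedIn Q T ∧ W = monomialIdealOutside k Q T := by
  set T : Set G := Subtype.val '' {q : Q | single q (1 : k) ∉ W}
  have hT : ∀ q : Q, (q : G) ∈ T ↔ single q (1 : k) ∉ W :=
    fun q => Subtype.val_injective.mem_set_image
  have hTd : IsDownClosedIn Q T := by
    intro x hx r hr hxr
    obtain ⟨q, hq, hqx⟩ := hxr
    refine (hT ⟨x, hx⟩).mpr fun hxW => hq ?_
    have := W.mul_mem_right (single ⟨r, hr⟩ 1) hxW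
    rwa [single_mul_single, mul_one,
      show (⟨x, hx⟩ + ⟨r, hr⟩ : Q) = q from Subtype.ext hqx.symm] at this
  refine ⟨T, fun _ ⟨q, _, hq⟩ => hq ▸ q.2, hTd, SetLike.coe_injective ?_⟩
  have : {f | f ∈ W ∧ ∃ q : Q, f = single q (1 : k)} =
      {f | ∃ q, single q 1 ∈ W ∧ f = single q 1} := by
    ext f; constructor
    · rintro ⟨hf, q, rfl⟩; exact ⟨q, hf, rfl⟩
    · rintro ⟨q, hq, rfl⟩; exact ⟨hq, q, rfl⟩
  rw [hW, this, coe_span_single_eq]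
  ext f
  simp [mem_monomialIdealOutside hTd, hT]

end CommSemiring

theorem sub_ofCoeff_filter_mem_monomialIdealOutside [CommRing k] (hX : IsDownClosedIn Q X)
    (g : AddMonoidAlgebra k Q) [DecidablePred fun q : Q => (q : G) ∈ X] :
    g - ofCoeff (g.coeff.filter fun q : Q => (q : G) ∈ X) ∈ monomialIdealOutside k Q X := by
  have : g - ofCoeff (g.coeff.filter fun q : Q => (q : G) ∈ X) =
      ofCoeff (g.coeff.filter fun q : Q => (q : G) ∉ X) := by
    rw [sub_eq_iff_eq_add', ← ofCoeff_add, Finsupp.filter_add_filter_not, ofCoeff_coeff]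
  rw [this, mem_monomialIdealOutside hX]
  intro q hq
  rw [coeff_ofCoeff, Finsupp.support_filter, Finset.mem_filter] at hq
  exact hq.2

end MonomialIdeal

instance AddSubmonoid.uniqueSums {M : Type*} [AddMonoid M] [UniqueSums M] (Q : AddSubmonoid M) :
    UniqueSums Q :=
  UniqueSums.of_injective_addHom Q.subtype.toAddHom Subtype.val_injective inferInstance

theorem exists_add_mem_vadd_of_forall_mem_vadd_sub {G : Type*} [AddCommGroup G]
    (F : AddSubmonoid G) (α : G) (U : Finset G)
    (hU : ∀ q ∈ U, q ∈ α +ᵥ ((F : Set G) - F)) : ∃ g ∈ F, ∀ q ∈ U, q + g ∈ α +ᵥ (F : Set G) := by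
  classical
  induction U using Finset.induction_on with
  | empty => exact ⟨0, F.zero_mem, by simp⟩
  | insert q U _ ih =>
    rw [Finset.forall_mem_insert] at hU
    obtain ⟨g, hg, hgU⟩ := ih hU.2
    obtain ⟨u, hu, w, hw, h⟩ := Set.mem_vadd_sub_iff.mp hU.1
    refine ⟨g + w, F.add_mem hg hw, Finset.forall_mem_insert .. |>.mpr ⟨?_, fun p hp => ?_⟩⟩
    · refine Set.mem_vadd_set.mpr ⟨u + g, F.add_mem hu hg, ?_⟩
      rw [vadd_eq_add]
      linear_combination (norm := module) -h
    · obtain ⟨f, hf, hfp⟩ := Set.mem_vadd_set.mp (hgU p hp)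
      refine Set.mem_vadd_set.mpr ⟨f + w, F.add_mem hf hw, ?_⟩
      rw [vadd_eq_add] at hfp ⊢
      linear_combination (norm := module) hfp

open AddMonoidAlgebra in
theorem AddMonoidAlgebra.of'_mul_divOf_of_forall {k M : Type*} [Semiring k] [AddCommMonoid M]
    [IsCancelAdd M]
    {x : AddMonoidAlgebra k M} {β : M} (h : ∀ m ∈ x.coeff.support, ∃ d, m = β + d) :
    of' k M β * x.divOf β = x := by
  have : x.modOf β = 0 := by
    ext m
    by_cases hm : ∃ d, m = β + d
    · simp [coeff_modOf_of_exists_add _ _ _ hm]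
    · rw [coeff_modOf_of_not_exists_add _ _ _ hm]
      simpa using mt (h m) hm
  simpa [this] using divOf_add_modOf x β

section TopLayer

open AddMonoidAlgebra

variable {k G : Type*} [AddCommGroup G] {Q : AddSubmonoid G}

theorem exists_of'_mul_eq_of'_mul [Semiring k] {F : AddSubmonoid G} (hFQ : F ≤ Q)
    {t : AddMonoidAlgebra k Q} {β γ : Q}
    (ht : ∀ q ∈ t.coeff.support, ∃ f ∈ F, (γ : G) + q = β + f) :
    ∃ s : AddMonoidAlgebra k Q, (∀ p ∈ s.coeff.support, (p : G) ∈ F) ∧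
      of' k Q γ * t = of' k Q β * s := by
  classical
  have hsupp : ∀ m ∈ (of' k Q γ * t).coeff.support, ∃ f ∈ F, (m : G) = β + f := by
    intro m hm
    obtain ⟨q, hq, rfl⟩ := Finset.mem_image.mp (support_coeff_single_mul_subset t 1 γ hm)
    exact ht q hq
  refine ⟨(of' k Q γ * t).divOf β, fun p hp => ?_, (of'_mul_divOf_of_forall fun m hm => ?_).symm⟩
  · obtain ⟨f, hf, hβf⟩ := hsupp (β + p) (Finsupp.mem_support_iff.mpr
      (by rw [← coeff_divOf]; exact Finsupp.mem_support_iff.mp hp))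
    rw [AddSubmonoid.coe_add, add_right_inj] at hβf
    exact hβf ▸ hf
  · obtain ⟨f, hf, hβf⟩ := hsupp m hm
    exact ⟨⟨f, hFQ hf⟩, Subtype.ext hβf⟩

theorem exists_ne_zero_mem_inf_span_singleton [CommRing k] [IsDomain k] [UniqueSums G]
    {F : AddSubmonoid G} (hFQ : F ≤ Q) {α : G} {t₁ t₂ : AddMonoidAlgebra k Q}
    (h₁ : t₁ ≠ 0) (h₂ : t₂ ≠ 0)
    (ht₁ : ∀ q ∈ t₁.coeff.support, (q : G) ∈ α +ᵥ ((F : Set G) - F))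
    (ht₂ : ∀ q ∈ t₂.coeff.support, (q : G) ∈ α +ᵥ ((F : Set G) - F)) :
    ∃ c ∈ Ideal.span {t₁} ⊓ Ideal.span {t₂}, c ≠ 0 ∧
      ∀ q ∈ c.coeff.support, (q : G) ∈ α +ᵥ (F : Set G) := by
  classical
  obtain ⟨g, hg, hgU⟩ := exists_add_mem_vadd_of_forall_mem_vadd_sub F α
    ((t₁.coeff.support ∪ t₂.coeff.support).image (↑)) (by
      simp only [Finset.mem_image, Finset.mem_union]
      rintro _ ⟨q, hq | hq, rfl⟩ <;> [exact ht₁ q hq; exact ht₂ q hq])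
  obtain ⟨q₀, hq₀⟩ := Finsupp.support_nonempty_iff.mpr (mt coeff_eq_zero.mp h₁)
  obtain ⟨f₀, hf₀, hαf₀⟩ :=
    Set.mem_vadd_set.mp (hgU q₀ (Finset.mem_image_of_mem _ (Finset.mem_union_left _ hq₀)))
  rw [vadd_eq_add] at hαf₀
  -- after multiplying by `x ^ γ`, both `tᵢ` become `x ^ β` times something supported on `F`
  set β : Q := q₀ + ⟨g, hFQ hg⟩
  set γ : Q := ⟨g + f₀, Q.add_mem (hFQ hg) (hFQ hf₀)⟩
  have hγβ : ∀ q : Q, (q : G) + g ∈ α +ᵥ (F : Set G) → ∃ f ∈ F, (γ : G) + q = β + f := by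
    intro q hq
    obtain ⟨f, hf, hfq⟩ := Set.mem_vadd_set.mp hq
    rw [vadd_eq_add] at hfq
    refine ⟨f, hf, ?_⟩
    simp only [γ, β, AddSubmonoid.coe_add]
    linear_combination (norm := module) hαf₀ - hfq
  obtain ⟨s₁, hs₁, e₁⟩ := exists_of'_mul_eq_of'_mul (k := k) hFQ fun q hq =>
    hγβ q (hgU q (Finset.mem_image_of_mem _ (Finset.mem_union_left _ hq)))
  obtain ⟨s₂, hs₂, e₂⟩ := exists_of'_mul_eq_of'_mul (k := k) hFQ fun q hq =>
    hγβ q (hgU q (Finset.mem_image_of_mem _ (Finset.mem_union_right _ hq)))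
  have hγ : of' k Q γ ≠ 0 := by simp [of']
  refine ⟨of' k Q γ * t₁ * s₂, ⟨?_, ?_⟩, mul_ne_zero (mul_ne_zero hγ h₁) ?_, fun m hm => ?_⟩
  · exact Ideal.mul_mem_right _ _ (Ideal.mul_mem_left _ _ (Ideal.mem_span_singleton_self t₁))
  · rw [e₁, mul_right_comm, ← e₂]
    exact Ideal.mul_mem_right _ _ (Ideal.mul_mem_left _ _ (Ideal.mem_span_singleton_self t₂))
  · rintro rfl
    exact mul_ne_zero hγ h₂ (by rw [e₂, mul_zero])
  · rw [e₁, mul_assoc] at hm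
    obtain ⟨p, hp, rfl⟩ := Finset.mem_image.mp (support_coeff_single_mul_subset _ 1 β hm)
    obtain ⟨p₁, hp₁, p₂, hp₂, rfl⟩ := Finset.mem_add.mp (support_coeff_mul_subset s₁ s₂ hp)
    refine Set.mem_vadd_set.mpr
      ⟨f₀ + (p₁ + p₂ : Q), F.add_mem hf₀ (F.add_mem (hs₁ p₁ hp₁) (hs₂ p₂ hp₂)), ?_⟩
    simp only [β, AddSubmonoid.coe_add, vadd_eq_add]
    linear_combination (norm := module) hαf₀

end TopLayer

def faceOf {G : Type*} [AddCommGroup G] (Q : AddSubmonoid G) (lam : G →ₗ[ℤ] ℤ) :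
    AddSubmonoid G where
  carrier := {q | q ∈ Q ∧ lam q = 0}
  zero_mem' := ⟨Q.zero_mem, map_zero lam⟩
  add_mem' := fun ⟨hp, hp0⟩ ⟨hq, hq0⟩ => ⟨Q.add_mem hp hq, by rw [map_add, hp0, hq0, add_zero]⟩

section Irreducible

open AddMonoidAlgebra

variable {k G : Type*} [AddCommGroup G] {Q : AddSubmonoid G} {lam : G →ₗ[ℤ] ℤ}

theorem faceOf_le : faceOf Q lam ≤ Q := fun _ h => h.1

theorem exists_ne_zero_mem_sup_span_singleton [CommRing k] (hlam : ∀ q ∈ Q, 0 ≤ lam q) (α : G)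
    {f : AddMonoidAlgebra k Q}
    (hf : f ∉ monomialIdealOutside k Q (α +ᵥ ((faceOf Q lam : Set G) - Q))) :
    ∃ t ∈ monomialIdealOutside k Q (α +ᵥ ((faceOf Q lam : Set G) - Q)) ⊔ Ideal.span {f},
      t ≠ 0 ∧ ∀ q ∈ t.coeff.support, (q : G) ∈ α +ᵥ ((faceOf Q lam : Set G) - faceOf Q lam) := by
  classical
  set S := α +ᵥ ((faceOf Q lam : Set G) - Q)
  have hS : IsDownClosedIn Q S := isDownClosedIn_vadd_sub Q α _
  rw [mem_monomialIdealOutside hS] at hf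
  push Not at hf
  -- minimality of `lam q₀` is what confines the truncation `t` below to `α + (F - F)`
  obtain ⟨q₀, hq₀, hmin⟩ :=
    Finset.exists_min_image (f.coeff.support.filter fun q : Q => (q : G) ∈ S) (fun q => lam q)
      (by obtain ⟨q, hq, hqS⟩ := hf; exact ⟨q, Finset.mem_filter.mpr ⟨hq, hqS⟩⟩)
  obtain ⟨hq₀f, hq₀S⟩ := Finset.mem_filter.mp hq₀
  obtain ⟨u₀, hu₀, w₀, hw₀, h₀⟩ := Set.mem_vadd_sub_iff.mp hq₀S
  set g := of' k Q ⟨w₀, hw₀⟩ * f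
  set t : AddMonoidAlgebra k Q := ofCoeff (g.coeff.filter fun q : Q => (q : G) ∈ S)
  refine ⟨t, ?_, fun ht => ?_, fun q' hq' => ?_⟩
  · have hg : g ∈ monomialIdealOutside k Q S ⊔ Ideal.span {f} :=
      Ideal.mem_sup_right (Ideal.mul_mem_left _ _ (Ideal.mem_span_singleton_self f))
    simpa using Submodule.sub_mem _ hg
      (Ideal.mem_sup_left (sub_ofCoeff_filter_mem_monomialIdealOutside hS g))
  · have hS₀ : (↑((⟨w₀, hw₀⟩ : Q) + q₀) : G) ∈ S :=
      Set.mem_vadd_sub_iff.mpr ⟨u₀, hu₀, 0, Q.zero_mem, by rw [add_zero, ← h₀]; exact add_comm _ _⟩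
    have := congrArg (fun x : AddMonoidAlgebra k Q => x.coeff ((⟨w₀, hw₀⟩ : Q) + q₀)) ht
    simp only [t, g, of', Finsupp.filter_apply, coeff_single_mul_add, one_mul, coeff_zero,
      Finsupp.coe_zero, Pi.zero_apply] at this
    rw [if_pos hS₀] at this
    exact (Finsupp.mem_support_iff.mp hq₀f) this
  · rw [coeff_ofCoeff, Finsupp.support_filter, Finset.mem_filter] at hq'
    obtain ⟨hq'g, hq'S⟩ := hq'
    obtain ⟨q, hq, rfl⟩ := Finset.mem_image.mp (support_coeff_single_mul_subset f 1 _ hq'g)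
    have hqS : (q : G) ∈ S := hS q q.2 w₀ hw₀ (by rwa [AddSubmonoid.coe_add, add_comm] at hq'S)
    have hle : lam q₀ ≤ lam q := hmin q (Finset.mem_filter.mpr ⟨hq, hqS⟩)
    obtain ⟨u, hu, w, hw, h⟩ := Set.mem_vadd_sub_iff.mp hq'S
    have e₀ := congrArg lam h₀
    have e := congrArg lam h
    simp only [map_add, hu₀.2, hu.2, AddSubmonoid.coe_add] at e₀ e
    have hw0 : lam w = 0 := le_antisymm (by linarith) (hlam w hw)
    exact Set.mem_vadd_sub_iff.mpr ⟨u, hu, w, ⟨hw, hw0⟩, h⟩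

theorem monomialIdealOutside_eq_or_eq_of_eq_inf [CommRing k] [IsDomain k] [UniqueSums G]
    (hlam : ∀ q ∈ Q, 0 ≤ lam q) (α : G) {I₁ I₂ : Ideal (AddMonoidAlgebra k Q)}
    (h : monomialIdealOutside k Q (α +ᵥ ((faceOf Q lam : Set G) - Q)) = I₁ ⊓ I₂) :
    monomialIdealOutside k Q (α +ᵥ ((faceOf Q lam : Set G) - Q)) = I₁ ∨
      monomialIdealOutside k Q (α +ᵥ ((faceOf Q lam : Set G) - Q)) = I₂ := by
  set W := monomialIdealOutside k Q (α +ᵥ ((faceOf Q lam : Set G) - Q))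
  have hS := isDownClosedIn_vadd_sub Q α (faceOf Q lam)
  have hW₁ : W ≤ I₁ := h ▸ inf_le_left
  have hW₂ : W ≤ I₂ := h ▸ inf_le_right
  by_contra! hne
  obtain ⟨f₁, hf₁, hf₁W⟩ := SetLike.exists_of_lt (hW₁.lt_of_ne hne.1)
  obtain ⟨f₂, hf₂, hf₂W⟩ := SetLike.exists_of_lt (hW₂.lt_of_ne hne.2)
  obtain ⟨t₁, ht₁I, ht₁0, ht₁⟩ := exists_ne_zero_mem_sup_span_singleton hlam α hf₁W
  obtain ⟨t₂, ht₂I, ht₂0, ht₂⟩ := exists_ne_zero_mem_sup_span_singleton hlam α hf₂W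
  have ht₁I₁ : t₁ ∈ I₁ := sup_le hW₁ ((Ideal.span_singleton_le_iff_mem _).mpr hf₁) ht₁I
  have ht₂I₂ : t₂ ∈ I₂ := sup_le hW₂ ((Ideal.span_singleton_le_iff_mem _).mpr hf₂) ht₂I
  obtain ⟨c, ⟨hc₁, hc₂⟩, hc0, hcF⟩ :=
    exists_ne_zero_mem_inf_span_singleton faceOf_le ht₁0 ht₂0 ht₁ ht₂
  have hcW : c ∈ W := h ▸ ⟨(Ideal.span_singleton_le_iff_mem _).mpr ht₁I₁ hc₁,
    (Ideal.span_singleton_le_iff_mem _).mpr ht₂I₂ hc₂⟩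
  obtain ⟨q, hq⟩ := Finsupp.support_nonempty_iff.mpr (mt coeff_eq_zero.mp hc0)
  obtain ⟨u, hu, hqu⟩ := Set.mem_vadd_set.mp (hcF q hq)
  exact (mem_monomialIdealOutside hS).mp hcW q hq
    (Set.mem_vadd_sub_iff.mpr ⟨u, hu, 0, Q.zero_mem, by rw [add_zero, ← hqu]; rfl⟩)

end Irreducible

theorem stmt7_general {d : ℕ} (k : Type*) [Field k]
    (Q : AddSubmonoid (Fin d → ℤ)) (hfg : Q.FG)
    (W : Ideal (AddMonoidAlgebra k ↥Q)) (hproper : W ≠ ⊤)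
    (hmono : (W : Set (AddMonoidAlgebra k ↥Q)) =
      (Submodule.span k {f | f ∈ W ∧ ∃ q : ↥Q, f = AddMonoidAlgebra.single q (1 : k)} :
        Submodule k (AddMonoidAlgebra k ↥Q))) :
    (∀ I₁ I₂ : Ideal (AddMonoidAlgebra k ↥Q), W = I₁ ⊓ I₂ → W = I₁ ∨ W = I₂) ↔
      ∃ (F : Set (Fin d → ℤ)) (α : Fin d → ℤ),
        IsFaceOf (Q : Set (Fin d → ℤ)) F ∧
        ((α +ᵥ (AddSubgroup.closure F : Set (Fin d → ℤ))) ∩ (Q : Set (Fin d → ℤ))).Nonempty ∧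
        (W : Set (AddMonoidAlgebra k ↥Q)) =
          (Submodule.span k {f | ∃ q : ↥Q,
              (q : Fin d → ℤ) ∉ α +ᵥ (F - (Q : Set (Fin d → ℤ))) ∧
              f = AddMonoidAlgebra.single q (1 : k)} :
            Submodule k (AddMonoidAlgebra k ↥Q)) := by
  obtain ⟨T, hTQ, hT, rfl⟩ := exists_eq_monomialIdealOutside _ hmono
  simp only [coe_span_single_eq, ← coe_monomialIdealOutside (isDownClosedIn_vadd_sub Q _ _),
    SetLike.coe_set_eq]
  constructor
  · intro hirr
    have hne : T.Nonempty := by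
      by_contra! hT0
      apply hproper
      rw [Ideal.eq_top_iff_one, mem_monomialIdealOutside hT]
      simp [hT0]
    obtain ⟨F, α, hF, hαT, hTeq⟩ := exists_isFaceOf_eq_of_isUnionIrreducibleIn hfg hTQ hT
      (isUnionIrreducibleIn_of_eq_inf hTQ hT hirr) hne
    refine ⟨F, α, hF, ⟨α, Set.mem_vadd_set.mpr ⟨0, zero_mem _, add_zero α⟩, hTQ hαT⟩, ?_⟩
    rw [hTeq, monomialIdealOutside_inter_self]
  · rintro ⟨F, α, ⟨lam, hlam, rfl⟩, -, hW⟩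
    rw [hW]
    exact fun I₁ I₂ => monomialIdealOutside_eq_or_eq_of_eq_inf hlam α

/-- Over a field `k` and a sharp affine semigroup `Q` generating `ℤ^d`,
a proper monomial ideal `W ⊆ k[Q]` is irreducible iff `W` is the `k`-span of the monomials
`x^q` with `q ∈ Q ∖ (α + F − Q)` for some face `F` of `Q` and some `α ∈ ℤ^d` with
`(α + ℤF) ∩ Q ≠ ∅`. -/
theorem stmt7 {d : ℕ} (k : Type*) [Field k]
    (Q : AddSubmonoid (Fin d → ℤ)) (hfg : Q.FG)
    (hsharp : (Q : Set (Fin d → ℤ)) ∩ (-(Q : Set (Fin d → ℤ))) = {0})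
    (hgen : AddSubgroup.closure (Q : Set (Fin d → ℤ)) = ⊤)
    (W : Ideal (AddMonoidAlgebra k ↥Q)) (hproper : W ≠ ⊤)
    (hmono : (W : Set (AddMonoidAlgebra k ↥Q)) =
      (Submodule.span k {f | f ∈ W ∧ ∃ q : ↥Q, f = AddMonoidAlgebra.single q (1 : k)} :
        Submodule k (AddMonoidAlgebra k ↥Q))) :
    (∀ I₁ I₂ : Ideal (AddMonoidAlgebra k ↥Q), W = I₁ ⊓ I₂ → W = I₁ ∨ W = I₂) ↔
      ∃ (F : Set (Fin d → ℤ)) (α : Fin d → ℤ),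
        IsFaceOf (Q : Set (Fin d → ℤ)) F ∧
        ((α +ᵥ (AddSubgroup.closure F : Set (Fin d → ℤ))) ∩ (Q : Set (Fin d → ℤ))).Nonempty ∧
        (W : Set (AddMonoidAlgebra k ↥Q)) =
          (Submodule.span k {f | ∃ q : ↥Q,
              (q : Fin d → ℤ) ∉ α +ᵥ (F - (Q : Set (Fin d → ℤ))) ∧
              f = AddMonoidAlgebra.single q (1 : k)} :
            Submodule k (AddMonoidAlgebra k ↥Q)) :=
  stmt7_general k Q hfg W hproper hmono
end

section
/- Let k be a field, Q ⊆ ℤ^d a sharp affine semigroup, and R = k[Q] its (noetherian) semigroup algebra. For a face F' of Q let P_{F'} denote the ideal of R spanned as a k-vector space by the monomials x^q with q ∈ Q ∖ F', and let dim F' be the dimension of the ℝ-linear span of F'. Fix a face F of Q, and let M be a finitely generated R-module such that every associated prime of M equals P_{F'} for some face F' of Q with dim F' ≥ dim F (as holds when M is ℤ^d-graded and F has minimal dimension among the faces of Q whose prime P_F is associated to M). Then the natural map from the submodule (0 :_M P_F) = {m ∈ M : P_F · m = 0} to its localization at the multiplicative set of monomials {x^f : f ∈ F} is injective; equivalently,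 if m ∈ M satisfies P_F · m = 0 and x^f · m = 0 for some f ∈ F, then m = 0. -/
open Pointwise

/-- The dimension of a face: the dimension of its `ℝ`-linear span. -/
noncomputable def faceDim {d : ℕ} (F : Set (Fin d → ℤ)) : ℕ :=
  Module.finrank ℝ (Submodule.span ℝ (toR '' F))

/-- The `k`-span of the monomials `x^q` with `q ∈ Q ∖ F'`; for a face `F'` this is
the prime ideal `P_{F'}` of `k[Q]`. -/
noncomputable def facePrimeSpan {d : ℕ} (k : Type*) [Field k] (Q : AddSubmonoid (Fin d → ℤ))
    (F' : Set (Fin d → ℤ)) : Submodule k (AddMonoidAlgebra k ↥Q) :=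
  Submodule.span k
    {f | ∃ q : ↥Q, (q : Fin d → ℤ) ∉ F' ∧ f = AddMonoidAlgebra.single q (1 : k)}

/-!
Let `P ⊇ ann m` be an associated prime of `m ≠ 0`, say `P = P_{F'}`. Every monomial killing `m`
lies in `P_{F'}`, so `P_F ⊆ P_{F'}` gives `F' ⊆ F`, while `x^f • m = 0` gives `f ∈ F ∖ F'`.
The functional cutting out `F'` vanishes on the span of `F'` but not at `f`, so
`dim F' < dim F`, contradicting `dim F ≤ dim F'`.
-/

noncomputable def realExtension {d : ℕ} (μ : (Fin d → ℤ) →ₗ[ℤ] ℤ) : (Fin d → ℝ) →ₗ[ℝ] ℝ :=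
  ∑ i, (μ (Pi.single i 1) : ℝ) • LinearMap.proj i

lemma realExtension_toR {d : ℕ} (μ : (Fin d → ℤ) →ₗ[ℤ] ℤ) (q : Fin d → ℤ) :
    realExtension μ (toR q) = μ q := by
  classical
  conv_rhs => rw [pi_eq_sum_univ' q, map_sum]
  simp_rw [LinearMap.map_smul]
  simp [realExtension, toR, mul_comm]

namespace IsFaceOf

variable {d : ℕ} {Q F : Set (Fin d → ℤ)}

lemma subset_s9 (hF : IsFaceOf Q F) : F ⊆ Q := by
  obtain ⟨_, -, rfl⟩ := hF
  exact fun _ hq => hq.1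

lemma toR_notMem_span (hF : IsFaceOf Q F) {f : Fin d → ℤ} (hfQ : f ∈ Q) (hfF : f ∉ F) :
    toR f ∉ Submodule.span ℝ (toR '' F) := by
  obtain ⟨μ, -, rfl⟩ := hF
  have hker : Submodule.span ℝ (toR '' {q | q ∈ Q ∧ μ q = 0}) ≤
      LinearMap.ker (realExtension μ) := by
    rw [Submodule.span_le]
    rintro _ ⟨q, ⟨-, hq⟩, rfl⟩
    simp [realExtension_toR, hq]
  intro hf
  have := hker hf
  rw [LinearMap.mem_ker, realExtension_toR, Int.cast_eq_zero] at this
  exact hfF ⟨hfQ, this⟩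

lemma faceDim_lt (hF : IsFaceOf Q F) {G : Set (Fin d → ℤ)} (hFG : F ⊆ G)
    {f : Fin d → ℤ} (hfG : f ∈ G) (hfQ : f ∈ Q) (hfF : f ∉ F) : faceDim F < faceDim G :=
  Submodule.finrank_lt_finrank_of_lt <| lt_of_le_of_ne (Submodule.span_mono (Set.image_mono hFG))
    fun h => hF.toR_notMem_span hfQ hfF (h ▸ Submodule.subset_span ⟨f, hfG, rfl⟩)

end IsFaceOf

lemma facePrimeSpan_eq_supported {d : ℕ} (k : Type*) [Field k] (Q : AddSubmonoid (Fin d → ℤ))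
    (F : Set (Fin d → ℤ)) :
    facePrimeSpan k Q F = AddMonoidAlgebra.supported k k {q : Q | (q : Fin d → ℤ) ∉ F} := by
  rw [AddMonoidAlgebra.supported_eq_span_single, facePrimeSpan]
  congr 1
  ext
  simp [eq_comm]

lemma single_one_mem_facePrimeSpan_iff {d : ℕ} {k : Type*} [Field k]
    {Q : AddSubmonoid (Fin d → ℤ)} {F : Set (Fin d → ℤ)} {q : Q} :
    AddMonoidAlgebra.single q (1 : k) ∈ facePrimeSpan k Q F ↔ (q : Fin d → ℤ) ∉ F := by
  rw [facePrimeSpan_eq_supported, AddMonoidAlgebra.mem_supported,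
    AddMonoidAlgebra.coeff_single]
  simp

instance AddMonoidAlgebra.isNoetherianRing_of_fg {R G : Type*} [CommRing R] [IsNoetherianRing R]
    [AddCommMonoid G] [AddMonoid.FG G] : IsNoetherianRing (AddMonoidAlgebra R G) :=
  Algebra.FiniteType.isNoetherianRing R _

theorem stmt9_general {d : ℕ} (k : Type*) [Field k]
    (Q : AddSubmonoid (Fin d → ℤ)) (hfg : Q.FG)
    (F : Set (Fin d → ℤ))
    (M : Type*) [AddCommGroup M] [Module (AddMonoidAlgebra k ↥Q) M]
    [Module.Finite (AddMonoidAlgebra k ↥Q) M]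
    (hass : ∀ p ∈ associatedPrimes (AddMonoidAlgebra k ↥Q) M,
      ∃ F' : Set (Fin d → ℤ), IsFaceOf (Q : Set (Fin d → ℤ)) F' ∧
        faceDim F ≤ faceDim F' ∧
        (p : Set (AddMonoidAlgebra k ↥Q)) = (facePrimeSpan k Q F' : Set (AddMonoidAlgebra k ↥Q)))
    (m : M)
    (hann : ∀ r ∈ facePrimeSpan k Q F, r • m = 0)
    (f : ↥Q) (hfF : (f : Fin d → ℤ) ∈ F)
    (hfm : AddMonoidAlgebra.single f (1 : k) • m = 0) :
    m = 0 := by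
  have : AddMonoid.FG Q := (AddMonoid.fg_iff_addSubmonoid_fg Q).mpr hfg
  by_contra hm
  obtain ⟨P, hP, hmP⟩ :=
    exists_le_isAssociatedPrime_of_isNoetherianRing (AddMonoidAlgebra k Q) m hm
  obtain ⟨F', hF', hdim, hPF'⟩ := hass P hP
  have hkill : ∀ q : Q, AddMonoidAlgebra.single q (1 : k) • m = 0 → (q : Fin d → ℤ) ∉ F' := by
    intro q hq
    rw [← single_one_mem_facePrimeSpan_iff (k := k), ← SetLike.mem_coe, ← hPF']
    exact hmP (by rwa [Submodule.mem_colon_singleton, Submodule.mem_bot])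
  have hF'F : F' ⊆ F := fun q hqF' => by
    by_contra hqF
    exact hkill ⟨q, hF'.subset_s9 hqF'⟩ (hann _ (single_one_mem_facePrimeSpan_iff.mpr hqF)) hqF'
  exact (hF'.faceDim_lt hF'F hfF f.2 (hkill f hfm)).not_ge hdim

/-- Lemma 3.2.  Let `Q` be a sharp affine semigroup, `F` a face of `Q`,
and `M` a finitely generated `k[Q]`-module all of whose associated primes are of the form
`P_{F'}` for faces `F'` with `dim F' ≥ dim F`.  If `m ∈ M` is annihilated by `P_F` and by
some monomial `x^f` with `f ∈ F`, then `m = 0`; that is, the natural map from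
`(0 :_M P_F)` to its localization along `F` is injective. -/
theorem stmt9 {d : ℕ} (k : Type*) [Field k]
    (Q : AddSubmonoid (Fin d → ℤ)) (hfg : Q.FG)
    (hsharp : (Q : Set (Fin d → ℤ)) ∩ (-(Q : Set (Fin d → ℤ))) = {0})
    (F : Set (Fin d → ℤ)) (hF : IsFaceOf (Q : Set (Fin d → ℤ)) F)
    (M : Type*) [AddCommGroup M] [Module (AddMonoidAlgebra k ↥Q) M]
    [Module.Finite (AddMonoidAlgebra k ↥Q) M]
    (hass : ∀ p ∈ associatedPrimes (AddMonoidAlgebra k ↥Q) M,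
      ∃ F' : Set (Fin d → ℤ), IsFaceOf (Q : Set (Fin d → ℤ)) F' ∧
        faceDim F ≤ faceDim F' ∧
        (p : Set (AddMonoidAlgebra k ↥Q)) = (facePrimeSpan k Q F' : Set (AddMonoidAlgebra k ↥Q)))
    (m : M)
    (hann : ∀ r ∈ facePrimeSpan k Q F, r • m = 0)
    (f : ↥Q) (hfF : (f : Fin d → ℤ) ∈ F)
    (hfm : AddMonoidAlgebra.single f (1 : k) • m = 0) :
    m = 0 :=
  stmt9_general k Q hfg F M hass m hann f hfF hfm
end

section
/- Let Q ⊆ ℤ^d be a saturated affine semigroup presented as Q = {β ∈ ℤ^d : τ_i(β) ≥ 0 for all i = 1,…,n}, and fix faces F_1,…,F_r of Q and degrees α_1,…,α_r ∈ ℤ^d. Define τ(β) = (τ_1(β),…,τ_n(β)) and, for each j, τ^j ∈ (ℤ ∪ {∞})^n by τ^j_i = τ_i(α_j) if τ_i vanishes identically on F_j and τ^j_i = ∞ otherwise. Then for every α ∈ ℤ^d and every A ⊆ {1,…,r}: α lies in the sector S_A if and only if A = {j ∈ {1,…,r} : τ(α) ≤ τ^j componentwise}. -/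
open Pointwise

lemma key_sector {d n : ℕ} (Q : AddSubmonoid (Fin d → ℤ))
    (τ : Fin n → ((Fin d → ℤ) →ₗ[ℤ] ℤ))
    (hQ : (Q : Set (Fin d → ℤ)) = {β | ∀ i, 0 ≤ τ i β})
    (F : Set (Fin d → ℤ)) (hF : IsFaceOf (Q : Set (Fin d → ℤ)) F)
    (a α : Fin d → ℤ) :
    α ∈ a +ᵥ (F - (Q : Set (Fin d → ℤ))) ↔
      ∀ i, (∀ f ∈ F, τ i f = 0) → τ i α ≤ τ i a := by
  obtain ⟨lam, hlam, hFeq⟩ := hF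
  have hτpos : ∀ q ∈ (Q : Set (Fin d → ℤ)), ∀ i, 0 ≤ τ i q := by
    intro q hq i; rw [hQ] at hq; exact hq i
  have hFQ : ∀ x ∈ F, x ∈ (Q : Set (Fin d → ℤ)) := by
    intro x hx; rw [hFeq] at hx; exact hx.1
  constructor
  · rintro ⟨x, hx, rfl⟩
    obtain ⟨f, hf, q, hq, rfl⟩ := hx
    intro i hvan
    have h1 : τ i f = 0 := hvan f hf
    have h2 : 0 ≤ τ i q := hτpos q hq i
    have : τ i (a +ᵥ (f - q)) = τ i a + τ i f - τ i q := by
      show τ i (a + (f - q)) = _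
      rw [map_add, map_sub]; ring
    rw [this]; linarith
  · intro h
    -- F as an AddSubmonoid
    set M : AddSubmonoid (Fin d → ℤ) :=
      { carrier := F
        zero_mem' := by
          simp only [hFeq]
          exact ⟨Q.zero_mem, map_zero lam⟩
        add_mem' := by
          intro x y hx hy
          simp only [hFeq] at hx hy ⊢
          exact ⟨Q.add_mem hx.1 hy.1, by rw [map_add, hx.2, hy.2, add_zero]⟩ } with hM
    have hMF : ∀ x, x ∈ M ↔ x ∈ F := fun x => Iff.rfl
    -- choose generators with positive value of each non-vanishing τ i
    have hg : ∀ i : Fin n, ∃ g, g ∈ F ∧ ((¬ ∀ f ∈ F, τ i f = 0) → 1 ≤ τ i g) := by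
      intro i
      by_cases hvan : ∀ f ∈ F, τ i f = 0
      · exact ⟨0, (hMF 0).mp M.zero_mem, fun hc => absurd hvan hc⟩
      · push_neg at hvan
        obtain ⟨g, hgF, hgne⟩ := hvan
        refine ⟨g, hgF, fun _ => ?_⟩
        have := hτpos g (hFQ g hgF) i
        omega
    choose g hgF hgpos using hg
    set β : Fin d → ℤ := α - a with hβ
    set c : Fin n → ℕ := fun i => (τ i β).toNat with hc
    set f : Fin d → ℤ := ∑ k : Fin n, (c k) • g k with hf
    have hfF : f ∈ F := by
      refine (hMF f).mp (AddSubmonoid.sum_mem M fun k _ => AddSubmonoid.nsmul_mem M ?_ (c k))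
      exact (hMF (g k)).mpr (hgF k)
    have hτf : ∀ i, τ i f = ∑ k : Fin n, (c k : ℤ) * τ i (g k) := by
      intro i
      rw [hf, map_sum]
      exact Finset.sum_congr rfl fun k _ => by
        rw [map_nsmul]; simp [nsmul_eq_mul]
    have hqQ : f - β ∈ (Q : Set (Fin d → ℤ)) := by
      rw [hQ]
      intro i
      show 0 ≤ τ i (f - β)
      rw [map_sub]
      by_cases hvan : ∀ x ∈ F, τ i x = 0
      · have h1 : τ i f = 0 := hvan f hfF
        have h2 : τ i β ≤ 0 := by
          have := h i hvan
          rw [hβ, map_sub]; omega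
        omega
      · have h1 : (c i : ℤ) * τ i (g i) ≤ τ i f := by
          rw [hτf i]
          refine Finset.single_le_sum (f := fun k => (c k : ℤ) * τ i (g k)) ?_ (Finset.mem_univ i)
          intro k _
          exact mul_nonneg (Int.natCast_nonneg _) (hτpos (g k) (hFQ (g k) (hgF k)) i)
        have h2 : 1 ≤ τ i (g i) := hgpos i hvan
        have h3 : τ i β ≤ (c i : ℤ) := by rw [hc]; simp [Int.self_le_toNat]
        nlinarith [Int.natCast_nonneg (c i)]
    refine ⟨f - (f - β), ⟨f, hfF, f - β, hqQ, rfl⟩, ?_⟩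
    show a + (f - (f - β)) = α
    rw [sub_sub_cancel, hβ]
    abel

open Classical in
/-- Lemma 6.1.  With `Q` a saturated affine semigroup presented by
facet functionals `τ_1,…,τ_n`, faces `F_1,…,F_r` and degrees `α_1,…,α_r`, and
`τ^j ∈ (ℤ ∪ {∞})^n` defined by `τ^j_i = τ_i(α_j)` if `τ_i` vanishes on `F_j` and `∞`
otherwise: a degree `α` lies in the sector `S_A` iff
`A = {j : τ(α) ≤ τ^j componentwise}`. -/
theorem stmt10 {d n r : ℕ} (Q : AddSubmonoid (Fin d → ℤ)) (hfg : Q.FG)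
    (τ : Fin n → ((Fin d → ℤ) →ₗ[ℤ] ℤ))
    (hQ : (Q : Set (Fin d → ℤ)) = {β | ∀ i, 0 ≤ τ i β})
    (F : Fin r → Set (Fin d → ℤ))
    (hFface : ∀ j, IsFaceOf (Q : Set (Fin d → ℤ)) (F j))
    (αs : Fin r → (Fin d → ℤ))
    (α : Fin d → ℤ) (A : Set (Fin r)) :
    {j | α ∈ αs j +ᵥ (F j - (Q : Set (Fin d → ℤ)))} = A ↔
      A = {j | ∀ i, (τ i α : WithTop ℤ) ≤
        (if ∀ f ∈ F j, τ i f = 0 then ((τ i (αs j) : ℤ) : WithTop ℤ) else ⊤)} := by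
  have hiff : ∀ j i, ((τ i α : WithTop ℤ) ≤
      (if ∀ f ∈ F j, τ i f = 0 then ((τ i (αs j) : ℤ) : WithTop ℤ) else ⊤)) ↔
      ((∀ f ∈ F j, τ i f = 0) → τ i α ≤ τ i (αs j)) := by
    intro j i
    split_ifs with hvan
    · rw [WithTop.coe_le_coe]
      exact ⟨fun h _ => h, fun h => h hvan⟩
    · exact iff_of_true le_top (fun hv => absurd hv hvan)
  have hset : {j | α ∈ αs j +ᵥ (F j - (Q : Set (Fin d → ℤ)))} =
      {j | ∀ i, (τ i α : WithTop ℤ) ≤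
        (if ∀ f ∈ F j, τ i f = 0 then ((τ i (αs j) : ℤ) : WithTop ℤ) else ⊤)} := by
    ext j
    simp only [Set.mem_setOf_eq]
    rw [key_sector Q τ hQ (F j) (hFface j) (αs j) α]
    exact (forall_congr' fun i => (hiff j i)).symm
  rw [hset]
  exact eq_comm
end

section
/- Let Q ⊆ ℤ^d be a saturated affine semigroup presented as Q = {β ∈ ℤ^d : τ_i(β) ≥ 0 for all i = 1,…,n}, fix faces F_1,…,F_r of Q and degrees α_1,…,α_r ∈ ℤ^d, and define τ^j ∈ (ℤ ∪ {∞})^n by τ^j_i = τ_i(α_j) if τ_i vanishes identically on F_j and ∞ otherwise. If β, β' ∈ ℤ^d lie in the same strip for each functional, i.e., for every i ∈ {1,…,n} one has {j : τ^j_i < τ_i(β)} = {j : τ^j_i < τ_i(β')}, then β and β' lie in the same sector: for every j ∈ {1,…,r}, β ∈ α_j + F_j − Q if and only if β' ∈ α_j + F_j − Q. (Thus the lattice points of each polyhedron Δ(ℓ_1,…,ℓ_n) cut out by consecutive hyperplanes τ_i = τ^j_i lie in a single sector, and this polyhedral partition of ℤ^d refines the sector partition.) -/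
open Pointwise

/-- Key lemma: sector membership is characterized by the inequalities
`τ i β ≤ τ i α` for all `i` whose functional vanishes on the face. -/
theorem sector_mem_iff {d n : ℕ} (Q : AddSubmonoid (Fin d → ℤ))
    (τ : Fin n → ((Fin d → ℤ) →ₗ[ℤ] ℤ))
    (hQ : (Q : Set (Fin d → ℤ)) = {β | ∀ i, 0 ≤ τ i β})
    (F : Set (Fin d → ℤ)) (hF : IsFaceOf (Q : Set (Fin d → ℤ)) F)
    (α β : Fin d → ℤ) :
    β ∈ α +ᵥ (F - (Q : Set (Fin d → ℤ))) ↔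
      ∀ i, (∀ f ∈ F, τ i f = 0) → τ i β ≤ τ i α := by
  classical
  obtain ⟨lam, hlam, hFeq⟩ := hF
  have hQ' : ∀ x, x ∈ Q ↔ ∀ i, 0 ≤ τ i x := by
    intro x
    rw [← SetLike.mem_coe, hQ]
    rfl
  constructor
  · rintro ⟨x, hx, rfl⟩ i hi
    obtain ⟨f, hf, q, hq, rfl⟩ := hx
    have h1 : τ i f = 0 := hi f hf
    have h2 : 0 ≤ τ i q := (hQ' q).1 hq i
    show τ i (α + (f - q)) ≤ τ i α
    rw [map_add, map_sub, h1]
    omega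
  · intro h
    have h0F : (0 : Fin d → ℤ) ∈ F := by
      rw [hFeq]; exact ⟨Q.zero_mem, map_zero lam⟩
    have hFQ : F ⊆ (Q : Set (Fin d → ℤ)) := by
      rw [hFeq]; exact fun x hx => hx.1
    have hFadd : ∀ x y : Fin d → ℤ, x ∈ F → y ∈ F → x + y ∈ F := by
      intro x y hx hy
      rw [hFeq] at hx hy ⊢
      exact ⟨Q.add_mem hx.1 hy.1, by rw [map_add, hx.2, hy.2, add_zero]⟩
    have hFadd' : ∀ x ∈ F, ∀ y ∈ F, x + y ∈ F := fun x hx y hy => hFadd x y hx hy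
    -- pick, for each i, an element of F on which τ i is positive (if any)
    set pick : Fin n → (Fin d → ℤ) := fun i =>
      if hi : ∃ f ∈ F, τ i f ≠ 0 then hi.choose else 0 with hpickdef
    have hpickF : ∀ i, pick i ∈ F := by
      intro i
      rw [hpickdef]
      dsimp only
      split
      · exact (Exists.choose_spec ‹∃ f ∈ F, τ i f ≠ 0›).1
      · exact h0F
    have hpickpos : ∀ i, ¬ (∀ f ∈ F, τ i f = 0) → 1 ≤ τ i (pick i) := by
      intro i hi
      have hex : ∃ f ∈ F, τ i f ≠ 0 := by push_neg at hi; exact hi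
      have hspec := hex.choose_spec
      have hQmem : hex.choose ∈ Q := hFQ hspec.1
      have hnn : 0 ≤ τ i hex.choose := (hQ' _).1 hQmem i
      have hne : τ i hex.choose ≠ 0 := hspec.2
      rw [hpickdef]
      dsimp only
      rw [dif_pos hex]
      omega
    -- g : sum of all picks
    set g : Fin d → ℤ := ∑ i : Fin n, pick i with hgdef
    have hgF : g ∈ F := by
      rw [hgdef]
      exact Finset.sum_induction pick (· ∈ F) hFadd h0F (fun i _ => hpickF i)
    have hgnn : ∀ i, 0 ≤ τ i g := fun i => (hQ' g).1 (hFQ hgF) i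
    have hgi : ∀ i, ¬ (∀ f ∈ F, τ i f = 0) → 1 ≤ τ i g := by
      intro i hi
      rw [hgdef, map_sum]
      calc (1 : ℤ) ≤ τ i (pick i) := hpickpos i hi
        _ ≤ ∑ k : Fin n, τ i (pick k) := by
            refine Finset.single_le_sum (f := fun k => τ i (pick k)) (fun k _ => ?_) (Finset.mem_univ i)
            exact (hQ' (pick k)).1 (hFQ (hpickF k)) i
    -- big multiple
    set N : ℕ := Finset.univ.sup fun i => (τ i (β - α)).toNat with hNdef
    have hN : ∀ i, τ i (β - α) ≤ (N : ℤ) := by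
      intro i
      have h1 : (τ i (β - α)).toNat ≤ N := Finset.le_sup (f := fun i => (τ i (β - α)).toNat) (Finset.mem_univ i)
      have h2 : τ i (β - α) ≤ ((τ i (β - α)).toNat : ℤ) := Int.self_le_toNat _
      omega
    have hsmulF : ∀ m : ℕ, m • g ∈ F := by
      intro m
      induction m with
      | zero => simpa using h0F
      | succ m ih =>
          rw [succ_nsmul]
          exact hFadd _ _ ih hgF
    set f : Fin d → ℤ := N • g with hfdef
    have hfF : f ∈ F := hsmulF N
    have hτf : ∀ i, τ i f = (N : ℤ) * τ i g := by
      intro i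
      rw [hfdef, map_nsmul, nsmul_eq_mul]
    set q : Fin d → ℤ := f - (β - α) with hqdef
    have hqQ : q ∈ Q := by
      rw [hQ' q]
      intro i
      rw [hqdef, map_sub]
      by_cases hi : ∀ f ∈ F, τ i f = 0
      · have h1 : τ i f = 0 := hi f hfF
        have h2 : τ i β ≤ τ i α := h i hi
        rw [map_sub]
        omega
      · have h1 : 1 ≤ τ i g := hgi i hi
        have h2 : τ i (β - α) ≤ (N : ℤ) := hN i
        have h3 : (N : ℤ) * 1 ≤ (N : ℤ) * τ i g :=
          mul_le_mul_of_nonneg_left h1 (by positivity)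
        rw [hτf i]
        omega
    refine ⟨f - q, ⟨f, hfF, q, hqQ, rfl⟩, ?_⟩
    show α + (f - q) = β
    rw [hqdef]
    abel

open Classical in
/-- Proposition 6.2.  With `Q` a saturated affine semigroup presented
by facet functionals `τ_1,…,τ_n`, faces `F_1,…,F_r`, degrees `α_1,…,α_r`, and
`τ^j ∈ (ℤ ∪ {∞})^n` as usual: if `β, β'` lie in the same strip for each functional
(`{j : τ^j_i < τ_i(β)} = {j : τ^j_i < τ_i(β')}` for all `i`), then they lie in the same
sector: `β ∈ α_j + F_j − Q ↔ β' ∈ α_j + F_j − Q` for all `j`. -/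
theorem stmt11 {d n r : ℕ} (Q : AddSubmonoid (Fin d → ℤ)) (hfg : Q.FG)
    (τ : Fin n → ((Fin d → ℤ) →ₗ[ℤ] ℤ))
    (hQ : (Q : Set (Fin d → ℤ)) = {β | ∀ i, 0 ≤ τ i β})
    (F : Fin r → Set (Fin d → ℤ))
    (hFface : ∀ j, IsFaceOf (Q : Set (Fin d → ℤ)) (F j))
    (αs : Fin r → (Fin d → ℤ))
    (β β' : Fin d → ℤ)
    (hstrip : ∀ i : Fin n,
      {j : Fin r | (if ∀ f ∈ F j, τ i f = 0 then ((τ i (αs j) : ℤ) : WithTop ℤ) else ⊤) <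
          (τ i β : WithTop ℤ)} =
      {j : Fin r | (if ∀ f ∈ F j, τ i f = 0 then ((τ i (αs j) : ℤ) : WithTop ℤ) else ⊤) <
          (τ i β' : WithTop ℤ)}) :
    ∀ j : Fin r, β ∈ αs j +ᵥ (F j - (Q : Set (Fin d → ℤ))) ↔
      β' ∈ αs j +ᵥ (F j - (Q : Set (Fin d → ℤ))) := by
  intro j
  rw [sector_mem_iff Q τ hQ (F j) (hFface j) (αs j) β,
    sector_mem_iff Q τ hQ (F j) (hFface j) (αs j) β']
  have key : ∀ i, (∀ f ∈ F j, τ i f = 0) →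
      ((τ i β ≤ τ i (αs j)) ↔ (τ i β' ≤ τ i (αs j))) := by
    intro i hi
    have hs := Set.ext_iff.mp (hstrip i) j
    simp only [Set.mem_setOf_eq, if_pos hi, WithTop.coe_lt_coe] at hs
    omega
  constructor
  · intro h i hi
    exact (key i hi).1 (h i hi)
  · intro h i hi
    exact (key i hi).2 (h i hi)
end

section
/- Let k be a field and Q ⊆ ℤ^d a sharp affine semigroup. For every face F of Q, the k-linear span P_F of the set of monomials {x^q : q ∈ Q ∖ F} is a prime ideal of the semigroup algebra k[Q], and the quotient k[Q]/P_F is isomorphic as a k-algebra to the semigroup algebra k[F] of the face F. -/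
/-!
Sending `x^q` to `x^q` for `q ∈ F` and to `0` otherwise is multiplicative precisely because `F` is
a face: `q + q' ∈ F` iff `q ∈ F` and `q' ∈ F`. This gives a surjective `k`-algebra map
`k[Q] → k[F]` whose kernel consists of the elements supported off `F`, i.e. is `P_F`; the kernel
is prime because `k[F]` is a domain, `F` being a submonoid of the torsion-free group `ℤ^d`.
-/

open Pointwise

namespace AddSubmonoid

variable {M : Type*} [AddMonoid M]

def IsFace (F : AddSubmonoid M) : Prop :=
  ∀ ⦃a b : M⦄, a + b ∈ F → a ∈ F ∧ b ∈ F

theorem isFace_mker_of_nonneg {N : Type*} [AddCommMonoid N] [PartialOrder N]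
    [IsOrderedAddMonoid N] (lam : M →+ N) (hlam : ∀ m, 0 ≤ lam m) :
    (AddMonoidHom.mker lam).IsFace := fun a b hab =>
  (add_eq_zero_iff_of_nonneg (hlam a) (hlam b)).1 (by simpa using hab)

def comapSubtypeEquivOfLe {Q F : AddSubmonoid M} (h : F ≤ Q) : F.comap Q.subtype ≃+ F where
  toFun q := ⟨q, q.2⟩
  invFun p := ⟨⟨p, h p.2⟩, p.2⟩
  left_inv _ := rfl
  right_inv _ := rfl
  map_add' _ _ := rfl

end AddSubmonoid

noncomputable section

namespace AddMonoidAlgebra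

theorem mem_span_image_single_one_iff {k M : Type*} [Semiring k] {s : Set M}
    {x : AddMonoidAlgebra k M} :
    x ∈ Submodule.span k ((single · (1 : k)) '' s) ↔ ↑x.coeff.support ⊆ s := by
  have : (single · (1 : k)) '' s =
      (coeffLinearEquiv k : AddMonoidAlgebra k M ≃ₗ[k] (M →₀ k)).symm.toLinearMap ''
        ((Finsupp.single · 1) '' s) := by
    rw [Set.image_image]; rfl
  rw [this, Submodule.span_image, ← Finsupp.supported_eq_span_single, Submodule.mem_map_equiv,
    LinearEquiv.symm_symm, Finsupp.mem_supported]
  rfl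

open scoped Classical

variable (k : Type*) {M : Type*} [CommSemiring k] [AddMonoid M] {F : AddSubmonoid M}

def faceIndicator (hF : F.IsFace) : Multiplicative M →* AddMonoidAlgebra k F where
  toFun m := if h : m.toAdd ∈ F then single ⟨m.toAdd, h⟩ 1 else 0
  map_one' := dif_pos F.zero_mem
  map_mul' a b := by
    by_cases hab : (a * b).toAdd ∈ F
    · obtain ⟨ha, hb⟩ := hF hab
      simp only [dif_pos hab, dif_pos ha, dif_pos hb, single_mul_single, one_mul]
      rfl
    · rw [dif_neg hab]
      by_cases ha : a.toAdd ∈ F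
      · have hb : b.toAdd ∉ F := fun hb => hab (F.add_mem ha hb)
        rw [dif_neg hb, mul_zero]
      · rw [dif_neg ha, zero_mul]

def faceRestrict (hF : F.IsFace) : AddMonoidAlgebra k M →ₐ[k] AddMonoidAlgebra k F :=
  lift k (AddMonoidAlgebra k F) M (faceIndicator k hF)

variable {k}

theorem faceRestrict_single (hF : F.IsFace) (m : M) (c : k) :
    faceRestrict k hF (single m c) = if h : m ∈ F then single ⟨m, h⟩ c else 0 := by
  by_cases h : m ∈ F <;> simp [faceRestrict, faceIndicator, h]

theorem coeff_faceRestrict (hF : F.IsFace) (x : AddMonoidAlgebra k M) (p : F) :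
    (faceRestrict k hF x).coeff p = x.coeff p := by
  induction x using induction_linear with
  | zero => simp
  | add x y hx hy => simp [hx, hy]
  | single m c =>
    rw [faceRestrict_single]
    split_ifs with h
    · simp only [coeff_single, Finsupp.single_apply, Subtype.ext_iff]
    · rw [coeff_single, Finsupp.single_eq_of_ne (ne_of_mem_of_not_mem p.2 h), coeff_zero,
        Finsupp.coe_zero, Pi.zero_apply]

theorem faceRestrict_surjective (hF : F.IsFace) : Function.Surjective (faceRestrict k hF) := by
  intro y
  induction y using induction_linear with
  | zero => exact ⟨0, map_zero _⟩
  | add y z hy hz =>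
    obtain ⟨a, rfl⟩ := hy
    obtain ⟨b, rfl⟩ := hz
    exact ⟨a + b, map_add _ a b⟩
  | single p c => exact ⟨single p c, by simp [faceRestrict_single]⟩

theorem coe_ker_faceRestrict (hF : F.IsFace) :
    (RingHom.ker (faceRestrict k hF) : Set (AddMonoidAlgebra k M)) =
      Submodule.span k ((single · (1 : k)) '' (F : Set M)ᶜ) := by
  ext x
  rw [SetLike.mem_coe, SetLike.mem_coe, mem_span_image_single_one_iff, RingHom.mem_ker,
    ← coeff_eq_zero, Finsupp.ext_iff]
  simp only [coeff_faceRestrict, Finsupp.coe_zero, Pi.zero_apply, Set.subset_def,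
    Finsupp.mem_support_iff, Set.mem_compl_iff, SetLike.mem_coe, Subtype.forall]
  exact forall_congr' fun m => by tauto

end AddMonoidAlgebra

end

theorem stmt15_general {d : ℕ} (k : Type*) [Field k]
    (Q : AddSubmonoid (Fin d → ℤ))
    (F : AddSubmonoid (Fin d → ℤ))
    (hFface : ∃ lam : (Fin d → ℤ) →ₗ[ℤ] ℤ, (∀ q ∈ Q, 0 ≤ lam q) ∧
      (F : Set (Fin d → ℤ)) = {q | q ∈ Q ∧ lam q = 0}) :
    ∃ P : Ideal (AddMonoidAlgebra k ↥Q),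
      (P : Set (AddMonoidAlgebra k ↥Q)) =
        (Submodule.span k {f | ∃ q : ↥Q, (q : Fin d → ℤ) ∉ F ∧
            f = AddMonoidAlgebra.single q (1 : k)} :
          Submodule k (AddMonoidAlgebra k ↥Q)) ∧
      P.IsPrime ∧
      Nonempty ((AddMonoidAlgebra k ↥Q ⧸ P) ≃ₐ[k] AddMonoidAlgebra k ↥F) := by
  obtain ⟨lam, hlam, hF⟩ := hFface
  have hFQ : F ≤ Q := fun q hq => (Set.ext_iff.1 hF q).1 hq |>.1
  have hface : (F.comap Q.subtype).IsFace := by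
    have : F.comap Q.subtype = AddMonoidHom.mker (lam.toAddMonoidHom.comp Q.subtype) := by
      ext q
      exact (Set.ext_iff.1 hF q).trans (and_iff_right q.2)
    exact this ▸ AddSubmonoid.isFace_mker_of_nonneg _ fun q => hlam q q.2
  have : UniqueSums (F.comap Q.subtype) :=
    .of_injective_addHom (Q.subtype.comp (F.comap Q.subtype).subtype).toAddHom
      (Subtype.val_injective.comp Subtype.val_injective) inferInstance
  refine ⟨RingHom.ker (AddMonoidAlgebra.faceRestrict k hface), ?_, RingHom.ker_isPrime _,
    ⟨(Ideal.quotientKerAlgEquivOfSurjective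
      (AddMonoidAlgebra.faceRestrict_surjective hface)).trans
      (AddMonoidAlgebra.domCongr k k (AddSubmonoid.comapSubtypeEquivOfLe hFQ))⟩⟩
  rw [AddMonoidAlgebra.coe_ker_faceRestrict]
  congr 2
  ext f
  simp [eq_comm]

/-- Let `k` be a field and `Q ⊆ ℤ^d` a sharp affine semigroup.  For any
face `F` of `Q`, the `k`-linear span `P_F` of the monomials `x^q` with `q ∈ Q ∖ F` is a
prime ideal of `k[Q]`, and `k[Q]/P_F ≅ k[F]` as `k`-algebras. -/
theorem stmt15 {d : ℕ} (k : Type*) [Field k]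
    (Q : AddSubmonoid (Fin d → ℤ)) (hfg : Q.FG)
    (hsharp : (Q : Set (Fin d → ℤ)) ∩ (-(Q : Set (Fin d → ℤ))) = {0})
    (F : AddSubmonoid (Fin d → ℤ))
    (hFface : ∃ lam : (Fin d → ℤ) →ₗ[ℤ] ℤ, (∀ q ∈ Q, 0 ≤ lam q) ∧
      (F : Set (Fin d → ℤ)) = {q | q ∈ Q ∧ lam q = 0}) :
    ∃ P : Ideal (AddMonoidAlgebra k ↥Q),
      (P : Set (AddMonoidAlgebra k ↥Q)) =
        (Submodule.span k {f | ∃ q : ↥Q, (q : Fin d → ℤ) ∉ F ∧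
            f = AddMonoidAlgebra.single q (1 : k)} :
          Submodule k (AddMonoidAlgebra k ↥Q)) ∧
      P.IsPrime ∧
      Nonempty ((AddMonoidAlgebra k ↥Q ⧸ P) ≃ₐ[k] AddMonoidAlgebra k ↥F) :=
  stmt15_general k Q F hFface
end
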